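/- arXiv:1509.02326 — 5 statements merged into one kernel-verified Lean document; each statement's English description precedes it below -/
import Mathlib

section
/- Let X be a metric space with a Borel measure finite on balls. If U ⊂ X is a measurable p-path open set and E ⊂ U, then C_p(E) = 0 if and only if C_p^U(E) = 0. -/
open Set MeasureTheory Metric ENNReal

noncomputable section

/-- A rectifiable curve parameterized by arc length, modeled as a 1-Lipschitz
map on `[0, l]`. -/
structure Curve (X : Type*) [MetricSpace X] where
  l : ℝ
  l_nonneg : 0 ≤ l
  toFun : ℝ → X
  lip : LipschitzOnWith 1 toFun (Set.Icc 0 l)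

namespace Curve

variable {X : Type*} [MetricSpace X]

/-- A curve is nonconstant if it attains at least two values. -/
def Nonconstant (γ : Curve X) : Prop :=
  ∃ s ∈ Set.Icc 0 γ.l, ∃ t ∈ Set.Icc 0 γ.l, γ.toFun s ≠ γ.toFun t

/-- The curve integral `∫_γ ρ ds`. -/
def integral (γ : Curve X) (ρ : X → ℝ≥0∞) : ℝ≥0∞ :=
  ∫⁻ t in Set.Icc 0 γ.l, ρ (γ.toFun t)

/-- The curve lies entirely in a set `U`. -/
def InSet (γ : Curve X) (U : Set X) : Prop :=
  ∀ t ∈ Set.Icc 0 γ.l, γ.toFun t ∈ U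

end Curve

variable {X : Type*} [MetricSpace X] [MeasurableSpace X] [BorelSpace X]

/-- `|a - b|` as an element of `[0,∞]`, with the convention that the result is `∞`
whenever one of the terms is infinite. -/
def erealDiff (a b : EReal) : ℝ≥0∞ :=
  if a = ⊤ ∨ a = ⊥ ∨ b = ⊤ ∨ b = ⊥ then ⊤ else ENNReal.ofReal |a.toReal - b.toReal|

/-- `g` is an upper gradient of `f` relative to the set `U` (taking `U = univ`
gives the usual notion of upper gradient on `X`). -/
def IsUpperGradientOn (f : X → EReal) (g : X → ℝ≥0∞) (U : Set X) : Prop :=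
  Measurable g ∧ ∀ γ : Curve X, γ.InSet U → γ.Nonconstant →
    erealDiff (f (γ.toFun 0)) (f (γ.toFun γ.l)) ≤ γ.integral g

/-- The `p`-th power of the Newtonian norm of `f` on `U` (intrinsic to `U`):
`∫_U |f|^p dμ + inf_g ∫_U g^p dμ`, the infimum over all upper gradients of `f` in `U`. -/
def newtonianNormOn (μ : Measure X) (p : ℝ) (U : Set X) (f : X → EReal) : ℝ≥0∞ :=
  (∫⁻ x in U, (f x).abs ^ p ∂μ) +
    ⨅ (g : X → ℝ≥0∞) (_ : IsUpperGradientOn f g U), ∫⁻ x in U, (g x) ^ p ∂μ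

/-- The Sobolev capacity `C_p^U`, intrinsic to the metric measure space `U`. -/
def capacityOn (μ : Measure X) (p : ℝ) (U : Set X) (E : Set X) : ℝ≥0∞ :=
  ⨅ (f : X → EReal) (_ : AEMeasurable f (μ.restrict U) ∧ ∀ x ∈ E, 1 ≤ f x),
    newtonianNormOn μ p U f

/-- The Sobolev capacity `C_p` with respect to the underlying space `X`. -/
def capacity (μ : Measure X) (p : ℝ) (E : Set X) : ℝ≥0∞ :=
  capacityOn μ p Set.univ E

/-- A set `U` is quasiopen if for every `ε > 0` there is an open set `G` with
`C_p(G) < ε` such that `G ∪ U` is open. -/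
def Quasiopen (μ : Measure X) (p : ℝ) (U : Set X) : Prop :=
  ∀ ε : ℝ≥0∞, 0 < ε → ∃ G : Set X, IsOpen G ∧ capacity μ p G < ε ∧ IsOpen (G ∪ U)

/-- `G` is relatively open in `U`. -/
def RelOpenIn (U G : Set X) : Prop := ∃ V : Set X, IsOpen V ∧ G = V ∩ U

/-- `V` is quasiopen in `U` with respect to a capacity `cap`: for every `ε > 0`
there is a relatively open `G ⊆ U` with `cap G < ε` such that `G ∪ V` is relatively
open in `U`. -/
def QuasiopenInWith (cap : Set X → ℝ≥0∞) (U V : Set X) : Prop :=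
  ∀ ε : ℝ≥0∞, 0 < ε → ∃ G : Set X, G ⊆ U ∧ RelOpenIn U G ∧ cap G < ε ∧
    RelOpenIn U (G ∪ V)

/-- `u` is `C_p`-quasicontinuous on `U`: for every `ε > 0` there is an open
`G ⊆ X` with `C_p(G) < ε` such that `u|_{U ∖ G}` is finite and continuous. -/
def QuasicontOn (μ : Measure X) (p : ℝ) (u : X → EReal) (U : Set X) : Prop :=
  ∀ ε : ℝ≥0∞, 0 < ε → ∃ G : Set X, IsOpen G ∧ capacity μ p G < ε ∧
    ContinuousOn u (U \ G) ∧ ∀ x ∈ U \ G, u x ≠ ⊤ ∧ u x ≠ ⊥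

/-- `u` is `C_p^U`-quasicontinuous on `U`: for every `ε > 0` there is a relatively
open `G ⊆ U` with `C_p^U(G) < ε` such that `u|_{U ∖ G}` is finite and continuous. -/
def QuasicontOnSub (μ : Measure X) (p : ℝ) (u : X → EReal) (U : Set X) : Prop :=
  ∀ ε : ℝ≥0∞, 0 < ε → ∃ G : Set X, G ⊆ U ∧ RelOpenIn U G ∧ capacityOn μ p U G < ε ∧
    ContinuousOn u (U \ G) ∧ ∀ x ∈ U \ G, u x ≠ ⊤ ∧ u x ≠ ⊥

/-- A curve family has zero `p`-modulus: there is `0 ≤ ρ ∈ L^p(X)` with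
`∫_γ ρ ds = ∞` for every `γ ∈ Γ`. -/
def ZeroModulus (μ : Measure X) (p : ℝ) (Γ : Set (Curve X)) : Prop :=
  ∃ ρ : X → ℝ≥0∞, Measurable ρ ∧ (∫⁻ x, ρ x ^ p ∂μ) < ⊤ ∧ ∀ γ ∈ Γ, γ.integral ρ = ⊤

/-- `S` is relatively open in `[0, l]`. -/
def RelOpenInIcc (S : Set ℝ) (l : ℝ) : Prop :=
  ∃ V : Set ℝ, IsOpen V ∧ S = V ∩ Set.Icc 0 l

/-- `U` is `p`-path open: for `p`-a.e. curve `γ`, the preimage `γ⁻¹(U)` is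
relatively open in `[0, l_γ]`. -/
def PPathOpen (μ : Measure X) (p : ℝ) (U : Set X) : Prop :=
  ∃ Γ : Set (Curve X), ZeroModulus μ p Γ ∧ ∀ γ : Curve X, γ ∉ Γ →
    RelOpenInIcc {t ∈ Set.Icc 0 γ.l | γ.toFun t ∈ U} γ.l

/-- `f ∈ N^{1,p}(U)` (intrinsic to `U`). -/
def MemNewtonianOn (μ : Measure X) (p : ℝ) (U : Set X) (f : X → EReal) : Prop :=
  AEMeasurable f (μ.restrict U) ∧ newtonianNormOn μ p U f < ⊤

/-- `f ∈ N^{1,p}(X)`. -/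
def MemNewtonian (μ : Measure X) (p : ℝ) (f : X → EReal) : Prop :=
  MemNewtonianOn μ p Set.univ f



section AuxLemmas

private def Phi (a : EReal) : ℝ≥0∞ :=
  if a = ⊤ ∨ a = ⊥ then 1 else ENNReal.ofReal (min 1 |a.toReal|)

private lemma Phi_eq_one {a : EReal} (ha : 1 ≤ a) : Phi a = 1 := by
  unfold Phi; split
  · rfl
  · rename_i h
    push_neg at h
    have h1 : (1:ℝ) ≤ a.toReal := by
      have := EReal.toReal_le_toReal ha
        (by rw [show (1:EReal) = ((1:ℝ):EReal) from rfl]; exact EReal.coe_ne_bot 1) h.1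
      simpa using this
    rw [min_eq_left (by rw [abs_of_nonneg (by linarith)]; exact h1), ENNReal.ofReal_one]

private lemma Phi_le_abs (a : EReal) : Phi a ≤ a.abs := by
  unfold Phi; split
  · rename_i h
    rcases h with h | h <;> simp [h]
  · rename_i h
    push_neg at h
    nth_rewrite 2 [← EReal.coe_toReal h.1 h.2]
    rw [EReal.abs_def]
    exact ENNReal.ofReal_le_ofReal (min_le_right _ _)

private lemma measurable_Phi : Measurable Phi := by
  unfold Phi
  refine Measurable.ite ?_ measurable_const ?_
  · have : {a : EReal | a = ⊤ ∨ a = ⊥} = {⊤, ⊥} := by ext a; simp [Set.mem_setOf_eq]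
    rw [this]
    exact ((measurableSet_singleton (⊤:EReal)).union (measurableSet_singleton ⊥))
  · exact ENNReal.measurable_ofReal.comp ((measurable_const.min measurable_ereal_toReal.abs))

private lemma erealDiff_comm (a b : EReal) : erealDiff a b = erealDiff b a := by
  unfold erealDiff
  rw [abs_sub_comm]
  by_cases h : a = ⊤ ∨ a = ⊥ ∨ b = ⊤ ∨ b = ⊥
  · rw [if_pos h, if_pos (by tauto)]
  · rw [if_neg h, if_neg (by tauto)]

private lemma erealDiff_top_left (b : EReal) : erealDiff ⊤ b = ⊤ := if_pos (Or.inl rfl)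

private lemma erealDiff_zero_zero : erealDiff 0 0 = 0 := by
  unfold erealDiff
  rw [if_neg (by simp), sub_self, abs_zero, ENNReal.ofReal_zero]

private lemma one_sub_Phi_le {a : EReal} (b : EReal) (ha : 1 ≤ a) :
    1 - Phi b ≤ erealDiff a b := by
  unfold erealDiff
  split
  · exact le_top
  · rename_i h
    push_neg at h
    obtain ⟨ha1, ha2, hb1, hb2⟩ := h
    have har : (1:ℝ) ≤ a.toReal := by
      have := EReal.toReal_le_toReal ha
        (by rw [show (1:EReal) = ((1:ℝ):EReal) from rfl]; exact EReal.coe_ne_bot 1) ha1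
      simpa using this
    unfold Phi
    rw [if_neg (by tauto)]
    rw [tsub_le_iff_right, ← ENNReal.ofReal_one, ← ENNReal.ofReal_add (abs_nonneg _)
      (le_min (by norm_num) (abs_nonneg _))]
    apply ENNReal.ofReal_le_ofReal
    set ar := a.toReal
    set br := b.toReal
    have h1 := le_abs_self (ar - br)
    have h2 := le_abs_self br
    have h0 := abs_nonneg (ar - br)
    rcases min_cases 1 |br| with ⟨hm, hle⟩ | ⟨hm, hle⟩ <;> rw [hm] <;> linarith

private def Curve.restr {X : Type*} [MetricSpace X] (γ : Curve X) (s : ℝ) (h0 : 0 ≤ s)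
    (hsl : s ≤ γ.l) : Curve X :=
  ⟨s, h0, γ.toFun, γ.lip.mono (Set.Icc_subset_Icc le_rfl hsl)⟩

private def Curve.rev {X : Type*} [MetricSpace X] (γ : Curve X) : Curve X :=
  ⟨γ.l, γ.l_nonneg, fun t => γ.toFun (γ.l - t), by
    intro x hx y hy
    have hx' : γ.l - x ∈ Set.Icc 0 γ.l := by
      simp only [Set.mem_Icc] at hx ⊢; constructor <;> linarith [hx.1, hx.2]
    have hy' : γ.l - y ∈ Set.Icc 0 γ.l := by
      simp only [Set.mem_Icc] at hy ⊢; constructor <;> linarith [hy.1, hy.2]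
    calc edist (γ.toFun (γ.l - x)) (γ.toFun (γ.l - y)) ≤ 1 * edist (γ.l - x) (γ.l - y) :=
        γ.lip hx' hy'
      _ = 1 * edist x y := by
        rw [edist_dist, edist_dist, Real.dist_eq, Real.dist_eq]
        congr 1
        rw [show γ.l - x - (γ.l - y) = -(x - y) by ring, abs_neg]⟩

private lemma Curve.rev_apply {X : Type*} [MetricSpace X] (γ : Curve X) (t : ℝ) :
    γ.rev.toFun t = γ.toFun (γ.l - t) := rfl

private lemma Curve.rev_nonconstant {X : Type*} [MetricSpace X] {γ : Curve X}
    (h : γ.Nonconstant) : γ.rev.Nonconstant := by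
  obtain ⟨s, hs, t, ht, hne⟩ := h
  simp only [Set.mem_Icc] at hs ht
  refine ⟨γ.l - s, ?_, γ.l - t, ?_, ?_⟩
  · simp only [Curve.rev, Set.mem_Icc]; constructor <;> linarith [hs.1, hs.2]
  · simp only [Curve.rev, Set.mem_Icc]; constructor <;> linarith [ht.1, ht.2]
  · rw [Curve.rev_apply, Curve.rev_apply,
      show γ.l - (γ.l - s) = s by ring, show γ.l - (γ.l - t) = t by ring]
    exact hne

private lemma Curve.rev_integral {X : Type*} [MetricSpace X] (γ : Curve X) (ρ : X → ℝ≥0∞) :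
    γ.rev.integral ρ = γ.integral ρ := by
  unfold Curve.integral
  have hmp : MeasurePreserving (fun t : ℝ => γ.l - t) volume volume := by
    have := (measurePreserving_add_left (volume : Measure ℝ) γ.l).comp
      (Measure.measurePreserving_neg (volume : Measure ℝ))
    simpa [Function.comp_def, sub_eq_add_neg] using this
  have hemb : MeasurableEmbedding (fun t : ℝ => γ.l - t) :=
    (MeasurableEquiv.subLeft γ.l).measurableEmbedding
  have hpre : (fun t : ℝ => γ.l - t) ⁻¹' (Set.Icc 0 γ.l) = Set.Icc 0 γ.l := by
    ext t
    simp only [Set.mem_preimage, Set.mem_Icc]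
    constructor <;> rintro ⟨h1, h2⟩ <;> constructor <;> linarith
  have key := hmp.setLIntegral_comp_preimage_emb hemb (fun t => ρ (γ.toFun t)) (Set.Icc 0 γ.l)
  rw [hpre] at key
  calc ∫⁻ t in Set.Icc 0 γ.rev.l, ρ (γ.rev.toFun t)
      = ∫⁻ t in Set.Icc 0 γ.l, (fun u => ρ (γ.toFun u)) ((fun t : ℝ => γ.l - t) t) := rfl
    _ = ∫⁻ t in Set.Icc 0 γ.l, ρ (γ.toFun t) := key

end AuxLemmas

private lemma capacityOn_le_capacity (μ : Measure X) (p : ℝ) (U : Set X) (E : Set X) :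
    capacityOn μ p U E ≤ capacity μ p E := by
  rw [capacity, capacityOn, capacityOn]
  refine le_iInf₂ fun f hf => ?_
  have hadm : AEMeasurable f (μ.restrict U) ∧ ∀ x ∈ E, 1 ≤ f x := by
    refine ⟨?_, hf.2⟩
    have := hf.1
    rw [Measure.restrict_univ] at this
    exact this.mono_measure Measure.restrict_le_self
  refine le_trans (iInf₂_le f hadm) ?_
  rw [newtonianNormOn, newtonianNormOn]
  refine add_le_add ?_ ?_
  · exact lintegral_mono' (Measure.restrict_mono (Set.subset_univ U) le_rfl) le_rfl
  · refine le_iInf₂ fun g hg => ?_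
    have hgU : IsUpperGradientOn f g U :=
      ⟨hg.1, fun γ _ hnc => hg.2 γ (fun t _ => Set.mem_univ _) hnc⟩
    exact le_trans (iInf₂_le g hgU)
      (lintegral_mono' (Measure.restrict_mono (Set.subset_univ U) le_rfl) le_rfl)

set_option maxHeartbeats 1000000 in
private lemma capacity_eq_zero_of_capacityOn (μ : Measure X) {p : ℝ} (hp : 1 ≤ p)
    {U : Set X} (hUm : MeasurableSet U) (hUp : PPathOpen μ p U)
    {E : Set X} (hEU : E ⊆ U) (hcap : capacityOn μ p U E = 0) :
    capacity μ p E = 0 := by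
  have hp0 : (0:ℝ) < p := lt_of_lt_of_le one_pos hp
  obtain ⟨Γ₀, ⟨ρ₀, hρ₀m, hρ₀fin, hρ₀⟩, hΓ₀⟩ := hUp
  -- the target accuracies
  set ε : ℕ → ℝ≥0∞ := fun n => ((2:ℝ≥0∞)⁻¹ ^ (n+1)) ^ p with hεdef
  have hbase_ne0 : ∀ n : ℕ, ((2:ℝ≥0∞)⁻¹ ^ (n+1)) ≠ 0 :=
    fun n => pow_ne_zero _ (by norm_num)
  have hbase_le1 : ∀ n : ℕ, ((2:ℝ≥0∞)⁻¹ ^ (n+1)) ≤ 1 :=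
    fun n => pow_le_one₀ zero_le (by norm_num)
  have hbase_netop : ∀ n : ℕ, ((2:ℝ≥0∞)⁻¹ ^ (n+1)) ≠ ⊤ :=
    fun n => ne_top_of_le_ne_top one_ne_top (hbase_le1 n)
  have hεpos : ∀ n, 0 < ε n := fun n => ENNReal.rpow_pos
    (lt_of_le_of_ne zero_le (Ne.symm (hbase_ne0 n))) (hbase_netop n)
  have hεle : ∀ n, ε n ≤ (2:ℝ≥0∞)⁻¹ ^ (n+1) := fun n => by
    have := ENNReal.rpow_le_rpow_of_exponent_ge (x := (2:ℝ≥0∞)⁻¹ ^ (n+1)) (hbase_le1 n) hp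
    rwa [ENNReal.rpow_one] at this
  -- choose admissible functions and upper gradients
  have H : ∀ n : ℕ, ∃ f : X → EReal,
      (AEMeasurable f (μ.restrict U) ∧ ∀ x ∈ E, 1 ≤ f x) ∧
      ∃ g : X → ℝ≥0∞, IsUpperGradientOn f g U ∧
        (∫⁻ x in U, (f x).abs ^ p ∂μ) < ε n ∧ (∫⁻ x in U, g x ^ p ∂μ) < ε n := by
    intro n
    have h0 : capacityOn μ p U E < ε n := hcap ▸ hεpos n
    rw [capacityOn, iInf_lt_iff] at h0
    obtain ⟨f, h0⟩ := h0
    rw [iInf_lt_iff] at h0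
    obtain ⟨hfadm, h0⟩ := h0
    rw [newtonianNormOn] at h0
    have h1 : (∫⁻ x in U, (f x).abs ^ p ∂μ) < ε n := lt_of_le_of_lt le_self_add h0
    have h2 : (⨅ g, ⨅ _ : IsUpperGradientOn f g U, ∫⁻ x in U, g x ^ p ∂μ) < ε n :=
      lt_of_le_of_lt le_add_self h0
    rw [iInf_lt_iff] at h2
    obtain ⟨g, h2⟩ := h2
    rw [iInf_lt_iff] at h2
    obtain ⟨hg, h2⟩ := h2
    exact ⟨f, hfadm, g, hg, h1, h2⟩
  choose f hfadm g hUG hfint hgint using H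
  have hfadm0 : ∀ n, AEMeasurable (f n) (μ.restrict U) := fun n => (hfadm n).1
  have hfadm1 : ∀ n, ∀ x ∈ E, 1 ≤ f n x := fun n => (hfadm n).2
  -- truncate the gradients outside U
  set gt : ℕ → X → ℝ≥0∞ := fun n => U.indicator (g n) with hgtdef
  have hgtm : ∀ n, Measurable (gt n) := fun n => ((hUG n).1).indicator hUm
  have hUGt : ∀ n, IsUpperGradientOn (f n) (gt n) U := by
    intro n
    refine ⟨hgtm n, fun γ hin hnc => ?_⟩
    have heq : γ.integral (gt n) = γ.integral (g n) := by
      unfold Curve.integral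
      refine setLIntegral_congr_fun measurableSet_Icc (
        fun t ht => ?_)
      exact Set.indicator_of_mem (hin t ht) _
    rw [heq]
    exact (hUG n).2 γ hin hnc
  have hgtint : ∀ n, (∫⁻ x, gt n x ^ p ∂μ) < ε n := by
    intro n
    have heq : (fun x => gt n x ^ p) = U.indicator (fun x => g n x ^ p) := by
      funext x
      by_cases hx : x ∈ U
      · simp only [hgtdef, Set.indicator_of_mem hx]
      · simp only [hgtdef, Set.indicator_of_notMem hx, ENNReal.zero_rpow_of_pos hp0]
    rw [heq, lintegral_indicator hUm]
    exact hgint n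
  -- the singular set A
  set A : Set X := {x | x ∈ U ∧ (∑' n, Phi (f n x) ^ p) = ⊤} with hAdef
  have hEA : E ⊆ A := by
    intro x hx
    refine ⟨hEU hx, ?_⟩
    rw [tsum_congr (fun n => by rw [Phi_eq_one (hfadm1 n x hx), ENNReal.one_rpow])]
    exact ENNReal.tsum_const_eq_top_of_ne_zero one_ne_zero
  have hA0 : μ A = 0 := by
    set f' : ℕ → X → EReal := fun n => (hfadm0 n).mk (f n) with hf'def
    have hf'm : ∀ n, Measurable (f' n) := fun n => (hfadm0 n).measurable_mk
    have hf'ae : ∀ n, f n =ᵐ[μ.restrict U] f' n := fun n => (hfadm0 n).ae_eq_mk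
    set Bad : Set X := {x | (∑' n, Phi (f' n x) ^ p) = ⊤} with hBaddef
    have hsumm : Measurable fun x => ∑' n, Phi (f' n x) ^ p :=
      Measurable.ennreal_tsum fun n => (measurable_Phi.comp (hf'm n)).pow_const p
    have hBadm : MeasurableSet Bad := hsumm (measurableSet_singleton ⊤)
    have hint : (∫⁻ x in U, ∑' n, Phi (f' n x) ^ p ∂μ) ≠ ⊤ := by
      rw [lintegral_tsum (f := fun n x => Phi (f' n x) ^ p)
        (fun n => ((measurable_Phi.comp (hf'm n)).pow_const p).aemeasurable)]
      have hn : ∀ n : ℕ, (∫⁻ x in U, Phi (f' n x) ^ p ∂μ) ≤ (2:ℝ≥0∞)⁻¹ ^ (n+1) := by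
        intro n
        have e1 : (∫⁻ x in U, Phi (f' n x) ^ p ∂μ) = ∫⁻ x in U, Phi (f n x) ^ p ∂μ :=
          lintegral_congr_ae (((hf'ae n).fun_comp (fun a => Phi a ^ p)).symm)
        rw [e1]
        refine le_trans (lintegral_mono fun x => ENNReal.rpow_le_rpow (Phi_le_abs _) hp0.le)
          (le_trans (hfint n).le (hεle n))
      refine ne_top_of_le_ne_top ?_ (ENNReal.tsum_le_tsum hn)
      rw [ENNReal.tsum_geometric_add_one]
      exact ENNReal.mul_ne_top (by norm_num)
        (ENNReal.inv_ne_top.mpr (by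
          rw [show (1:ℝ≥0∞) - 2⁻¹ = 2⁻¹ by
            rw [← ENNReal.inv_two_add_inv_two, ENNReal.add_sub_cancel_right (by norm_num)]]
          norm_num))
    have hBadU : μ.restrict U Bad = 0 := by
      have hae := ae_lt_top hsumm hint
      have : Bad ⊆ {x | ¬ (∑' n, Phi (f' n x) ^ p) < ⊤} := by
        intro x hx
        simp only [Set.mem_setOf_eq, not_lt, top_le_iff]
        exact hx
      exact measure_mono_null this (ae_iff.mp hae)
    have hNset : μ.restrict U (⋃ n, {x | f n x ≠ f' n x}) = 0 :=
      measure_iUnion_null fun n => ae_iff.mp (hf'ae n)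
    have hsubA : A ⊆ (Bad ∩ U) ∪ ((⋃ n, {x | f n x ≠ f' n x}) ∩ U) := by
      intro x hx
      by_cases hxn : x ∈ ⋃ n, {x | f n x ≠ f' n x}
      · exact Or.inr ⟨hxn, hx.1⟩
      · left
        refine ⟨?_, hx.1⟩
        simp only [Set.mem_iUnion, Set.mem_setOf_eq, not_exists, not_not] at hxn
        show (∑' n, Phi (f' n x) ^ p) = ⊤
        rw [tsum_congr fun n => by rw [← hxn n]]
        exact hx.2
    refine measure_mono_null hsubA (measure_union_null ?_ ?_)
    · rw [← Measure.restrict_apply' hUm]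
      exact hBadU
    · rw [← Measure.restrict_apply' hUm]
      exact hNset
  obtain ⟨A'', hA''sub, hA''m, hA''0⟩ := exists_measurable_superset_of_null hA0
  -- assemble the master gradient
  set S : X → ℝ≥0∞ := fun x => ∑' n, gt n x with hSdef
  have hSm : Measurable S := Measurable.ennreal_tsum hgtm
  set hind : X → ℝ≥0∞ := A''.indicator (fun _ => ⊤) with hhinddef
  have hhindm : Measurable hind := measurable_const.indicator hA''m
  set ρtot : X → ℝ≥0∞ := fun x => ρ₀ x + S x + hind x with hρtotdef
  have hρtotm : Measurable ρtot := (hρ₀m.add hSm).add hhindm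
  -- ∫ S^p ≤ 1 via Minkowski
  set P : ℕ → X → ℝ≥0∞ := fun N x => ∑ n ∈ Finset.range N, gt n x with hPdef
  have hPm : ∀ N, Measurable (P N) := fun N => Finset.measurable_sum _ (fun n _ => hgtm n)
  have hJg : ∀ n, (∫⁻ x, gt n x ^ p ∂μ) ^ (1/p) ≤ (2:ℝ≥0∞)⁻¹ ^ (n+1) := by
    intro n
    refine le_trans (ENNReal.rpow_le_rpow (hgtint n).le (by positivity)) ?_
    rw [hεdef, ← ENNReal.rpow_mul, mul_one_div_cancel hp0.ne', ENNReal.rpow_one]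
  have hPle : ∀ N, (∫⁻ x, P N x ^ p ∂μ) ^ (1/p) ≤ 1 := by
    have haux : ∀ N, (∫⁻ x, P N x ^ p ∂μ) ^ (1/p) ≤
        ∑ n ∈ Finset.range N, (2:ℝ≥0∞)⁻¹ ^ (n+1) := by
      intro N
      induction N with
      | zero =>
        simp only [hPdef, Finset.range_zero, Finset.sum_empty]
        rw [show (fun x : X => (0:ℝ≥0∞) ^ p) = fun _ => 0 from
          funext fun x => ENNReal.zero_rpow_of_pos hp0, lintegral_zero,
          ENNReal.zero_rpow_of_pos (by positivity)]
      | succ N ih =>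
        have hsplit : (P (N+1)) = fun x => P N x + gt N x := by
          funext x
          simp only [hPdef, Finset.sum_range_succ]
        rw [hsplit, Finset.sum_range_succ]
        refine le_trans (ENNReal.lintegral_Lp_add_le (hPm N).aemeasurable
          (hgtm N).aemeasurable hp) ?_
        exact add_le_add ih (hJg N)
    intro N
    refine le_trans (haux N) ?_
    calc ∑ n ∈ Finset.range N, (2:ℝ≥0∞)⁻¹ ^ (n+1)
        ≤ ∑' n : ℕ, (2:ℝ≥0∞)⁻¹ ^ (n+1) := ENNReal.sum_le_tsum _
      _ = 2⁻¹ * (1 - 2⁻¹)⁻¹ := ENNReal.tsum_geometric_add_one _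
      _ ≤ 1 := by
          rw [show (1:ℝ≥0∞) - 2⁻¹ = 2⁻¹ by
            rw [← ENNReal.inv_two_add_inv_two, ENNReal.add_sub_cancel_right (by norm_num)]]
          rw [ENNReal.mul_inv_cancel (by norm_num) (by norm_num)]
  have hSint : (∫⁻ x, S x ^ p ∂μ) ≤ 1 := by
    have hone : ∀ N, (∫⁻ x, P N x ^ p ∂μ) ≤ 1 := by
      intro N
      have h2 : (∫⁻ x, P N x ^ p ∂μ) = ((∫⁻ x, P N x ^ p ∂μ) ^ (1/p)) ^ p := by
        rw [← ENNReal.rpow_mul, one_div, inv_mul_cancel₀ hp0.ne', ENNReal.rpow_one]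
      rw [h2]
      calc ((∫⁻ x, P N x ^ p ∂μ) ^ (1/p)) ^ p ≤ (1:ℝ≥0∞) ^ p :=
          ENNReal.rpow_le_rpow (hPle N) hp0.le
        _ = 1 := ENNReal.one_rpow p
    have htd : ∀ x, Filter.Tendsto (fun N => P N x ^ p) Filter.atTop (nhds (S x ^ p)) := by
      intro x
      exact (ENNReal.continuous_rpow_const.tendsto _).comp (ENNReal.tendsto_nat_tsum _)
    have heq : (fun x => S x ^ p) = fun x => Filter.liminf (fun N => P N x ^ p) Filter.atTop := by
      funext x
      exact ((htd x).liminf_eq).symm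
    rw [heq]
    refine le_trans (lintegral_liminf_le fun N => (hPm N).pow_const p) ?_
    exact Filter.liminf_le_of_frequently_le' (Filter.Frequently.of_forall hone)
  have hhind0 : (∫⁻ x, hind x ^ p ∂μ) = 0 := by
    have heq : (fun x => hind x ^ p) = A''.indicator (fun _ => (⊤:ℝ≥0∞)) := by
      funext x
      by_cases hx : x ∈ A''
      · simp only [hhinddef, Set.indicator_of_mem hx, ENNReal.top_rpow_of_pos hp0]
      · simp only [hhinddef, Set.indicator_of_notMem hx, ENNReal.zero_rpow_of_pos hp0]
    rw [heq, lintegral_indicator hA''m, setLIntegral_const, hA''0, mul_zero]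
  -- total energy is finite
  have hC : (∫⁻ x, ρtot x ^ p ∂μ) < ⊤ := by
    have h1 : (∫⁻ x, ρtot x ^ p ∂μ) ^ (1/p) ≤
        (∫⁻ x, ρ₀ x ^ p ∂μ) ^ (1/p) + (∫⁻ x, S x ^ p ∂μ) ^ (1/p)
          + (∫⁻ x, hind x ^ p ∂μ) ^ (1/p) := by
      refine le_trans (ENNReal.lintegral_Lp_add_le (hρ₀m.add hSm).aemeasurable
        hhindm.aemeasurable hp) ?_
      exact add_le_add (ENNReal.lintegral_Lp_add_le hρ₀m.aemeasurable hSm.aemeasurable hp) le_rfl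
    have h2 : (∫⁻ x, ρ₀ x ^ p ∂μ) ^ (1/p) + (∫⁻ x, S x ^ p ∂μ) ^ (1/p)
        + (∫⁻ x, hind x ^ p ∂μ) ^ (1/p) < ⊤ := by
      refine ENNReal.add_lt_top.mpr ⟨ENNReal.add_lt_top.mpr ⟨?_, ?_⟩, ?_⟩
      · exact ENNReal.rpow_lt_top_of_nonneg (by positivity) hρ₀fin.ne
      · exact lt_of_le_of_lt (ENNReal.rpow_le_rpow hSint (by positivity))
          (by rw [ENNReal.one_rpow]; exact one_lt_top)
      · rw [hhind0, ENNReal.zero_rpow_of_pos (by positivity)]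
        exact zero_lt_top
    have h3 : (∫⁻ x, ρtot x ^ p ∂μ) = ((∫⁻ x, ρtot x ^ p ∂μ) ^ (1/p)) ^ p := by
      rw [← ENNReal.rpow_mul, one_div, inv_mul_cancel₀ hp0.ne', ENNReal.rpow_one]
    rw [h3]
    exact ENNReal.rpow_lt_top_of_nonneg hp0.le (lt_of_le_of_lt h1 h2).ne
  -- the key claim
  have key : ∀ γ : Curve X, γ.Nonconstant → γ.toFun 0 ∈ E → γ.integral ρtot = ⊤ := by
    intro γ hnc hγ0
    by_contra hfin
    have hl0 : 0 < γ.l := by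
      rcases lt_or_eq_of_le γ.l_nonneg with h | h
      · exact h
      · exfalso
        obtain ⟨s, hs, t, ht, hne⟩ := hnc
        rw [← h] at hs ht
        simp only [Set.mem_Icc] at hs ht
        have hs0 : s = 0 := le_antisymm hs.2 hs.1
        have ht0 : t = 0 := le_antisymm ht.2 ht.1
        rw [hs0, ht0] at hne
        exact hne rfl
    have hnotΓ : γ ∉ Γ₀ := by
      intro hmem
      have h1 := hρ₀ γ hmem
      have h2 : γ.integral ρ₀ ≤ γ.integral ρtot :=
        lintegral_mono fun t => le_add_right (le_add_right le_rfl)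
      rw [h1] at h2
      exact hfin (top_le_iff.mp h2)
    obtain ⟨V, hVopen, hVeq⟩ := hΓ₀ γ hnotΓ
    have h0V : (0:ℝ) ∈ V := by
      have h0mem : (0:ℝ) ∈ {t ∈ Set.Icc 0 γ.l | γ.toFun t ∈ U} :=
        ⟨⟨le_rfl, γ.l_nonneg⟩, hEU hγ0⟩
      rw [hVeq] at h0mem
      exact h0mem.1
    obtain ⟨δ₀, hδ₀pos, hball'⟩ := Metric.isOpen_iff.mp hVopen 0 h0V
    set δ : ℝ := min (δ₀/2) γ.l with hδdef
    have hδpos : 0 < δ := lt_min (by linarith) hl0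
    have hδl : δ ≤ γ.l := min_le_right _ _
    have hsub : ∀ t ∈ Set.Icc (0:ℝ) δ, γ.toFun t ∈ U := by
      intro t ht
      have htV : t ∈ V := by
        refine hball' ?_
        rw [Metric.mem_ball, Real.dist_eq, sub_zero, abs_of_nonneg ht.1]
        exact lt_of_le_of_lt ht.2 (lt_of_le_of_lt (min_le_left _ _) (by linarith))
      have hmem : t ∈ V ∩ Set.Icc 0 γ.l := ⟨htV, ht.1, le_trans ht.2 hδl⟩
      rw [← hVeq] at hmem
      exact hmem.2
    set c : ℕ → ℝ≥0∞ := fun n => ∫⁻ s in Set.Icc 0 δ, gt n (γ.toFun s) with hcdef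
    have hγae : AEMeasurable γ.toFun (volume.restrict (Set.Icc 0 δ)) :=
      ((γ.lip.continuousOn).mono (Set.Icc_subset_Icc le_rfl hδl)).aemeasurable measurableSet_Icc
    have hcsum : (∑' n, c n) ≠ ⊤ := by
      have h1 : (∑' n, c n) = ∫⁻ s in Set.Icc 0 δ, ∑' n, gt n (γ.toFun s) :=
        (lintegral_tsum fun n => (hgtm n).comp_aemeasurable hγae).symm
      have h2 : (∫⁻ s in Set.Icc 0 δ, ∑' n, gt n (γ.toFun s)) ≤ γ.integral ρtot := by
        refine le_trans (lintegral_mono fun s => ?_)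
          (lintegral_mono' (Measure.restrict_mono (Set.Icc_subset_Icc le_rfl hδl) le_rfl) le_rfl)
        exact le_add_right (le_add_left le_rfl)
      rw [h1]
      exact ne_top_of_le_ne_top hfin h2
    obtain ⟨N, hN⟩ : ∃ N, ∀ n ≥ N, c n < 2⁻¹ := by
      have htend := ENNReal.tendsto_atTop_zero_of_tsum_ne_top hcsum
      exact Filter.eventually_atTop.mp (htend.eventually_lt_const (by norm_num))
    have hmember : ∀ t ∈ Set.Ioc (0:ℝ) δ, γ.toFun t ∈ A := by
      intro t ht
      have htIcc : t ∈ Set.Icc (0:ℝ) δ := ⟨ht.1.le, ht.2⟩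
      refine ⟨hsub t htIcc, ?_⟩
      by_cases hconst : γ.toFun t = γ.toFun 0
      · rw [tsum_congr (fun n => by
          rw [hconst, Phi_eq_one (hfadm1 n _ hγ0), ENNReal.one_rpow])]
        exact ENNReal.tsum_const_eq_top_of_ne_zero one_ne_zero
      · set γt : Curve X := γ.restr t ht.1.le (le_trans ht.2 hδl) with hγtdef
        have hinU : γt.InSet U := fun s hs =>
          hsub s (Set.Icc_subset_Icc le_rfl ht.2 hs)
        have hnct : γt.Nonconstant :=
          ⟨0, ⟨le_rfl, ht.1.le⟩, t, ⟨ht.1.le, le_rfl⟩, fun h => hconst h.symm⟩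
        have hPhi : ∀ n, 1 - Phi (f n (γ.toFun t)) ≤ c n := by
          intro n
          have h1 := (hUGt n).2 γt hinU hnct
          have h2 : γt.integral (gt n) ≤ c n :=
            lintegral_mono' (Measure.restrict_mono (Set.Icc_subset_Icc le_rfl ht.2) le_rfl) le_rfl
          exact le_trans (one_sub_Phi_le _ (hfadm1 n _ hγ0)) (le_trans h1 h2)
        have hPhige : ∀ n, N ≤ n → (2⁻¹ : ℝ≥0∞) ≤ Phi (f n (γ.toFun t)) := by
          intro n hn
          have h1 : (1:ℝ≥0∞) ≤ c n + Phi (f n (γ.toFun t)) := tsub_le_iff_right.mp (hPhi n)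
          have h2 : (1:ℝ≥0∞) - c n ≤ Phi (f n (γ.toFun t)) := by
            rw [tsub_le_iff_right, add_comm]
            exact h1
          refine le_trans ?_ h2
          have h3 : (1:ℝ≥0∞) - 2⁻¹ ≤ 1 - c n := tsub_le_tsub_left (hN n hn).le 1
          rwa [show (1:ℝ≥0∞) - 2⁻¹ = 2⁻¹ by
            rw [← ENNReal.inv_two_add_inv_two, ENNReal.add_sub_cancel_right (by norm_num)]] at h3
        have hκ : ((2:ℝ≥0∞)⁻¹) ^ p ≠ 0 :=
          (ENNReal.rpow_pos (by norm_num) (by norm_num)).ne'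
        have h3 : ∀ n : ℕ, ((2:ℝ≥0∞)⁻¹) ^ p ≤ Phi (f (n + N) (γ.toFun t)) ^ p := fun n =>
          ENNReal.rpow_le_rpow (hPhige (n + N) (Nat.le_add_left N n)) hp0.le
        have h4 : (⊤:ℝ≥0∞) ≤ ∑' n : ℕ, Phi (f (n + N) (γ.toFun t)) ^ p := by
          calc (⊤:ℝ≥0∞) = ∑' _ : ℕ, ((2:ℝ≥0∞)⁻¹) ^ p :=
              (ENNReal.tsum_const_eq_top_of_ne_zero hκ).symm
            _ ≤ _ := ENNReal.tsum_le_tsum h3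
        have h5 := ENNReal.tsum_comp_le_tsum_of_injective
          (add_left_injective N) (fun n => Phi (f n (γ.toFun t)) ^ p)
        exact top_le_iff.mp (le_trans h4 h5)
    apply hfin
    have h6 : (∫⁻ s in Set.Ioc 0 δ, hind (γ.toFun s)) = ⊤ := by
      have heq : ∀ s ∈ Set.Ioc (0:ℝ) δ, hind (γ.toFun s) = ⊤ := fun s hs =>
        Set.indicator_of_mem (hA''sub (hmember s hs)) _
      rw [setLIntegral_congr_fun measurableSet_Ioc heq,
        setLIntegral_const, Real.volume_Ioc]
      exact ENNReal.top_mul (by rw [sub_zero]; exact (ENNReal.ofReal_pos.mpr hδpos).ne')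
    have h7 : (∫⁻ s in Set.Ioc 0 δ, hind (γ.toFun s)) ≤ γ.integral ρtot := by
      refine le_trans (lintegral_mono fun s =>
        (le_add_self : hind (γ.toFun s) ≤ (ρ₀ (γ.toFun s) + S (γ.toFun s)) + hind (γ.toFun s))) ?_
      refine lintegral_mono' (Measure.restrict_mono ?_ le_rfl) le_rfl
      exact fun s hs => ⟨hs.1.le, le_trans hs.2 hδl⟩
    rw [h6] at h7
    exact top_le_iff.mp h7
  -- endpoints version
  have key' : ∀ γ : Curve X, γ.Nonconstant →
      (γ.toFun 0 ∈ E ∨ γ.toFun γ.l ∈ E) → γ.integral ρtot = ⊤ := by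
    rintro γ hnc (h0 | hl)
    · exact key γ hnc h0
    · have h := key γ.rev (Curve.rev_nonconstant hnc)
        (by rw [Curve.rev_apply, sub_zero]; exact hl)
      rwa [Curve.rev_integral] at h
  -- the test function
  set F : X → EReal := E.indicator (fun _ => (⊤:EReal)) with hFdef
  have hFtop : ∀ x, x ∈ E → F x = ⊤ := fun x hx => Set.indicator_of_mem hx _
  have hFzero : ∀ x, x ∉ E → F x = 0 := fun x hx => Set.indicator_of_notMem hx _
  have hFae : ∀ᵐ x ∂μ, F x = 0 := by
    rw [ae_iff]
    refine measure_mono_null ?_ hA''0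
    intro x hx
    by_cases hxE : x ∈ E
    · exact hA''sub (hEA hxE)
    · exact absurd (hFzero x hxE) hx
  have hFadm : AEMeasurable F (μ.restrict Set.univ) ∧ ∀ x ∈ E, 1 ≤ F x := by
    constructor
    · rw [Measure.restrict_univ]
      exact (measurable_const (a := (0:EReal))).aemeasurable.congr
        (hFae.mono fun x hx => hx.symm)
    · intro x hx
      rw [hFtop x hx]
      exact le_top
  have hFint : (∫⁻ x in Set.univ, (F x).abs ^ p ∂μ) = 0 := by
    rw [Measure.restrict_univ]
    have h0 : ∀ᵐ x ∂μ, (F x).abs ^ p = 0 := hFae.mono fun x hx => by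
      rw [hx, EReal.abs_zero, ENNReal.zero_rpow_of_pos hp0]
    calc (∫⁻ x, (F x).abs ^ p ∂μ) = ∫⁻ _, 0 ∂μ := lintegral_congr_ae h0
      _ = 0 := lintegral_zero
  -- scaled upper gradients
  have hUGδ : ∀ d : ℝ≥0∞, d ≠ 0 → d ≠ ⊤ →
      IsUpperGradientOn F (fun x => d * ρtot x) Set.univ := by
    intro d hd0 hdtop
    refine ⟨hρtotm.const_mul d, fun γ _ hnc => ?_⟩
    have hint : γ.integral (fun x => d * ρtot x) = d * γ.integral ρtot :=
      lintegral_const_mul' d _ hdtop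
    by_cases h0 : γ.toFun 0 ∈ E
    · rw [hFtop _ h0, erealDiff_top_left, hint,
        key' γ hnc (Or.inl h0), ENNReal.mul_top hd0]
    by_cases hl : γ.toFun γ.l ∈ E
    · rw [hFtop _ hl, erealDiff_comm, erealDiff_top_left, hint,
        key' γ hnc (Or.inr hl), ENNReal.mul_top hd0]
    · rw [hFzero _ h0, hFzero _ hl, erealDiff_zero_zero]
      exact zero_le
  have hcaple : ∀ d : ℝ≥0∞, d ≠ 0 → d ≠ ⊤ →
      capacity μ p E ≤ d ^ p * ∫⁻ x, ρtot x ^ p ∂μ := by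
    intro d hd0 hdtop
    have step1 : capacity μ p E ≤ newtonianNormOn μ p Set.univ F := by
      rw [capacity, capacityOn]
      exact iInf₂_le F hFadm
    refine le_trans step1 ?_
    rw [newtonianNormOn, hFint, zero_add]
    refine le_trans (iInf₂_le (fun x => d * ρtot x) (hUGδ d hd0 hdtop)) ?_
    rw [Measure.restrict_univ]
    have e1 : (∫⁻ x, (d * ρtot x) ^ p ∂μ) = ∫⁻ x, d ^ p * ρtot x ^ p ∂μ :=
      lintegral_congr fun x => ENNReal.mul_rpow_of_nonneg _ _ hp0.le
    rw [e1]
    exact le_of_eq (lintegral_const_mul' _ _ (ENNReal.rpow_ne_top_of_nonneg hp0.le hdtop))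
  -- conclude
  refine le_antisymm ?_ zero_le
  refine ENNReal.le_of_forall_pos_le_add fun r hr _ => ?_
  rw [zero_add]
  set C : ℝ≥0∞ := ∫⁻ x, ρtot x ^ p ∂μ with hCdef
  set d : ℝ≥0∞ := min 1 ((r / 2) / (C + 1)) with hddef
  have hCtop : C + 1 ≠ ⊤ := ENNReal.add_ne_top.mpr ⟨hC.ne, one_ne_top⟩
  have hd0 : d ≠ 0 := by
    refine (lt_min one_pos ?_).ne'
    refine ENNReal.div_pos ?_ hCtop
    exact (ENNReal.div_pos (by exact_mod_cast hr.ne') (by norm_num)).ne'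
  have hdtop : d ≠ ⊤ := ne_top_of_le_ne_top one_ne_top (min_le_left _ _)
  have hd1 : d ≤ 1 := min_le_left _ _
  calc capacity μ p E ≤ d ^ p * C := hcaple d hd0 hdtop
    _ ≤ d * C := by
        refine mul_le_mul' ?_ le_rfl
        have := ENNReal.rpow_le_rpow_of_exponent_ge hd1 hp
        rwa [ENNReal.rpow_one] at this
    _ ≤ ((r / 2) / (C + 1)) * (C + 1) :=
        mul_le_mul' (min_le_right _ _) le_self_add
    _ = r / 2 := ENNReal.div_mul_cancel (by simp) hCtop
    _ ≤ r := ENNReal.half_le_self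

/-- For a measurable `p`-path open set `U` and `E ⊆ U`, one has `C_p(E) = 0`
iff `C_p^U(E) = 0`. -/
theorem stmt5 (μ : Measure X) (p : ℝ) (hp : 1 ≤ p)
    (hball : ∀ (x : X) (r : ℝ), μ (Metric.ball x r) < ⊤)
    (U : Set X) (hUm : MeasurableSet U) (hUp : PPathOpen μ p U)
    (E : Set X) (hEU : E ⊆ U) :
    capacity μ p E = 0 ↔ capacityOn μ p U E = 0 := by
  constructor
  · intro h
    exact le_antisymm (h ▸ capacityOn_le_capacity μ p U E) zero_le
  · intro h
    exact capacity_eq_zero_of_capacityOn μ hp hUm hUp hEU h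

end
end

section
/- Let X be a complete separable metric space, U ⊂ X coanalytic, and ρ : X → [0,∞] a Borel function. Define u_ρ(x) = inf_{γ ∈ Γ_x} ∫_γ ρ ds, where Γ_x is the family of all rectifiable curves γ : [0, l_γ] → X (including constant curves) with γ(0) = x and γ(l_γ) ∈ X ∖ U. Then u_ρ is universally measurable (in particular μ-measurable for every σ-finite Borel measure μ on X). -/
open Set MeasureTheory Metric ENNReal

noncomputable section

variable {X : Type*} [MetricSpace X] [MeasurableSpace X] [BorelSpace X]

/-- `u_ρ(x) = inf_γ ∫_γ ρ ds`, the infimum over all rectifiable curves (including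
constant ones) starting at `x` and ending in `X ∖ U`. -/
def uRho (U : Set X) (ρ : X → ℝ≥0∞) (x : X) : ℝ≥0∞ :=
  ⨅ (γ : Curve X) (_ : γ.toFun 0 = x ∧ γ.toFun γ.l ∈ Uᶜ), γ.integral ρ


section Luzin
open Filter Topology
open scoped NNReal

variable {α : Type*} [MetricSpace α] [MeasurableSpace α] [OpensMeasurableSpace α]

/-- prefix set -/
def Spre (v : ℕ → ℕ) (k : ℕ) : Set (ℕ → ℕ) := {y | ∀ i < k, y i ≤ v i}

lemma Spre_succ (v : ℕ → ℕ) (k : ℕ) :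
    Spre v (k+1) = Spre v k ∩ {y | y k ≤ v k} := by
  ext y; simp only [Spre, mem_setOf_eq, mem_inter_iff, Nat.lt_succ_iff_lt_or_eq]
  constructor
  · exact fun h => ⟨fun i hi => h i (Or.inl hi), h k (Or.inr rfl)⟩
  · rintro ⟨h1, h2⟩ i (hi | rfl)
    exacts [h1 i hi, h2]

lemma Spre_congr {v w : ℕ → ℕ} (k : ℕ) (h : ∀ i < k, v i = w i) : Spre v k = Spre w k := by
  ext y; exact ⟨fun hy i hi => h i hi ▸ hy i hi, fun hy i hi => (h i hi).symm ▸ hy i hi⟩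

lemma Spre_antitone (v : ℕ → ℕ) : Antitone (Spre v) :=
  fun k m hkm => fun y hy i hi => hy i (lt_of_lt_of_le hi hkm)

/-- the closures of images of prefix sets intersect inside the image of the compact set. -/
lemma iInter_closure_subset (f : (ℕ → ℕ) → α) (hf : Continuous f) (v : ℕ → ℕ) :
    (⋂ k, closure (f '' Spre v k)) ⊆ f '' {y | ∀ i, y i ≤ v i} := by
  intro x hx
  simp only [mem_iInter] at hx
  -- choose approximating points
  have hsel : ∀ k : ℕ, ∃ y ∈ Spre v k, dist x (f y) < 1/(k+1) := by
    intro k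
    have := hx k
    rw [Metric.mem_closure_iff] at this
    obtain ⟨b, hb, hd⟩ := this (1/(k+1)) (by positivity)
    obtain ⟨y, hy, rfl⟩ := hb
    exact ⟨y, hy, hd⟩
  choose y hy hdy using hsel
  -- a compact set containing all y k
  set τ : ℕ → ℕ := fun i => max (v i) ((Finset.range (i+1)).sup (fun k => y k i)) with hτ
  have hyK : ∀ k, y k ∈ Set.univ.pi fun i => Iic (τ i) := by
    intro k
    intro i _
    simp only [mem_Iic, hτ]
    rcases lt_or_ge i k with hik | hik
    · exact le_max_of_le_left (hy k i hik)
    · exact le_max_of_le_right (Finset.le_sup (f := fun k => y k i) (Finset.mem_range.2 (Nat.lt_succ_of_le hik)))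
  have hK : IsCompact (Set.univ.pi fun i => Iic (τ i)) :=
    isCompact_univ_pi fun i => (Set.finite_Iic (τ i)).isCompact
  obtain ⟨w, hw, φ, hφ, hconv⟩ := hK.tendsto_subseq hyK
  refine ⟨w, ?_, ?_⟩
  · -- w i ≤ v i
    intro i
    have hcoord : Tendsto (fun k => y (φ k) i) atTop (𝓝 (w i)) :=
      (continuous_apply i).continuousAt.tendsto.comp hconv
    have hev : ∀ᶠ k in atTop, y (φ k) i ∈ ({w i} : Set ℕ) :=
      hcoord.eventually (IsOpen.mem_nhds (isOpen_discrete _) rfl)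
    obtain ⟨k, hki, hkeq⟩ := (hev.and (eventually_ge_atTop (i+1))).exists
    simp only [mem_singleton_iff] at hki
    have : φ k > i := lt_of_lt_of_le (Nat.lt_succ_of_le (le_refl i)) (le_trans hkeq (hφ.le_apply))
    calc w i = y (φ k) i := hki.symm
    _ ≤ v i := hy (φ k) i this
  · -- f w = x
    have h1 : Tendsto (fun k => f (y (φ k))) atTop (𝓝 (f w)) :=
      (hf.continuousAt.tendsto).comp hconv
    have h2 : Tendsto (fun k => f (y (φ k))) atTop (𝓝 x) := by
      have hb : ∀ k, dist (f (y (φ k))) x ≤ 1/((φ k : ℝ) + 1) := fun k => by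
        rw [dist_comm]; exact (hdy (φ k)).le
      have hlim : Tendsto (fun k : ℕ => 1/((φ k : ℝ)+1)) atTop (𝓝 0) :=
        tendsto_one_div_add_atTop_nhds_zero_nat.comp hφ.tendsto_atTop
      exact tendsto_iff_dist_tendsto_zero.2 (squeeze_zero (fun k => dist_nonneg) hb hlim)
    exact tendsto_nhds_unique h1 h2

lemma exists_le_add_of_iSup {a : ℝ≥0∞} {b : ℕ → ℝ≥0∞} (ha : a ≠ ⊤)
    (h : a = ⨆ m, b m) {ε : ℝ≥0∞} (hε : ε ≠ 0) : ∃ m, a ≤ b m + ε := by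
  rcases eq_or_ne a 0 with rfl | ha0
  · exact ⟨0, by simp⟩
  · have hlt : a - ε < ⨆ m, b m := h ▸ ENNReal.sub_lt_self ha ha0 hε
    obtain ⟨m, hm⟩ := lt_iSup_iff.1 hlt
    exact ⟨m, by rw [add_comm]; exact tsub_le_iff_left.1 hm.le⟩

/-- Inner approximation by closed sets for continuous images of Baire space. -/
lemma exists_closed_subset_measure_le (f : (ℕ → ℕ) → α) (hf : Continuous f)
    (μ : Measure α) [IsFiniteMeasure μ] {ε : ℝ≥0∞} (hε : ε ≠ 0) :
    ∃ F : Set α, IsClosed F ∧ F ⊆ range f ∧ μ (range f) ≤ μ F + ε := by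
  obtain ⟨δ, hδpos, hδsum⟩ := ENNReal.exists_pos_sum_of_countable hε ℕ
  -- choice function for one step
  have hstep : ∀ (v : ℕ → ℕ) (k : ℕ), ∃ m : ℕ,
      μ (f '' Spre v k) ≤ μ (f '' (Spre v k ∩ {y | y k ≤ m})) + δ k := by
    intro v k
    have hsup : μ (f '' Spre v k) = ⨆ m, μ (f '' (Spre v k ∩ {y | y k ≤ m})) := by
      have hmono : Monotone (fun m : ℕ => f '' (Spre v k ∩ {y | y k ≤ m})) := by
        intro m m' hmm'
        exact image_mono (inter_subset_inter_right _ (fun y hy => le_trans hy (by exact_mod_cast hmm')))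
      rw [← hmono.measure_iUnion, ← image_iUnion]
      congr 1
      rw [← inter_iUnion]
      have : (⋃ m : ℕ, {y : ℕ → ℕ | y k ≤ m}) = univ := by
        ext y; simp only [mem_iUnion, mem_setOf_eq, mem_univ, iff_true]
        exact ⟨y k, le_rfl⟩
      rw [this, inter_univ]
    exact exists_le_add_of_iSup (measure_ne_top μ _) hsup (by exact_mod_cast (hδpos k).ne')
  choose mch hmch using hstep
  -- build the sequence of prefixes
  set v : ℕ → (ℕ → ℕ) := fun k => Nat.rec (fun _ => 0) (fun k vk => Function.update vk k (mch vk k)) k with hv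
  set σ : ℕ → ℕ := fun k => mch (v k) k with hσ
  have hvsucc : ∀ k, v (k+1) = Function.update (v k) k (σ k) := fun k => rfl
  have hstab : ∀ k, ∀ i < k, v k i = σ i := by
    intro k
    induction k with
    | zero => intro i hi; omega
    | succ k ih =>
      intro i hi
      rw [hvsucc k]
      rcases eq_or_ne i k with rfl | hik
      · simp [Function.update]
      · rw [Function.update_of_ne hik]
        exact ih i (by omega)
  have hSeq : ∀ k, Spre σ k = Spre (v k) k := fun k =>
    Spre_congr k (fun i hi => (hstab k i hi).symm)
  -- invariant
  have hinv : ∀ k, μ (range f) ≤ μ (f '' Spre σ k) + ∑ i ∈ Finset.range k, (δ i : ℝ≥0∞) := by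
    intro k
    induction k with
    | zero =>
      have : Spre σ 0 = univ := by ext y; simp [Spre]
      simp [this, image_univ]
    | succ k ih =>
      have hkey := hmch (v k) k
      rw [← hSeq k] at hkey
      have hset : Spre σ k ∩ {y | y k ≤ mch (v k) k} = Spre σ (k+1) := by
        rw [Spre_succ]
      rw [hset] at hkey
      calc μ (range f) ≤ μ (f '' Spre σ k) + ∑ i ∈ Finset.range k, (δ i : ℝ≥0∞) := ih
        _ ≤ (μ (f '' Spre σ (k+1)) + δ k) + ∑ i ∈ Finset.range k, (δ i : ℝ≥0∞) := by gcongr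
        _ = μ (f '' Spre σ (k+1)) + ∑ i ∈ Finset.range (k+1), (δ i : ℝ≥0∞) := by
            rw [Finset.sum_range_succ]; ring
  have hbound : ∀ k, μ (range f) ≤ μ (closure (f '' Spre σ k)) + ε := by
    intro k
    refine le_trans (hinv k) (add_le_add (measure_mono subset_closure) ?_)
    exact le_trans (ENNReal.sum_le_tsum _) hδsum.le
  refine ⟨⋂ k, closure (f '' Spre σ k), isClosed_iInter fun k => isClosed_closure, ?_, ?_⟩
  · exact (iInter_closure_subset f hf σ).trans (image_subset_range f _)
  · have hdir : Directed (· ⊇ ·) (fun k => closure (f '' Spre σ k)) := by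
      apply Antitone.directed_ge
      intro k m hkm
      exact closure_mono (image_mono (Spre_antitone σ hkm))
    rw [Directed.measure_iInter (fun k => (isClosed_closure.measurableSet).nullMeasurableSet)
      hdir ⟨0, measure_ne_top μ _⟩]
    rcases isEmpty_or_nonempty ℕ with h | h
    · exact absurd h (not_isEmpty_of_nonempty ℕ)
    rw [ENNReal.iInf_add]
    exact le_iInf fun k => hbound k

/-- **Luzin's theorem**: analytic sets are universally measurable (finite measures). -/
lemma analyticSet_nullMeasurableSet_finite {A : Set α}
    (hA : MeasureTheory.AnalyticSet A) (μ : Measure α) [IsFiniteMeasure μ] :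
    NullMeasurableSet A μ := by
  rw [MeasureTheory.AnalyticSet] at hA
  rcases hA with rfl | ⟨f, hf, rfl⟩
  · exact MeasurableSet.empty.nullMeasurableSet
  · have hF : ∀ n : ℕ, ∃ F : Set α, IsClosed F ∧ F ⊆ range f ∧
        μ (range f) ≤ μ F + (n+1 : ℝ≥0∞)⁻¹ := fun n =>
      exists_closed_subset_measure_le f hf μ (by simp)
    choose F hFc hFsub hFle using hF
    set B : Set α := ⋃ n, F n with hB
    have hBm : MeasurableSet B := MeasurableSet.iUnion fun n => (hFc n).measurableSet
    have hBsub : B ⊆ range f := iUnion_subset hFsub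
    have hBeq : μ B = μ (range f) := by
      refine le_antisymm (measure_mono hBsub) ?_
      refine ENNReal.le_of_forall_pos_le_add fun ε hε _ => ?_
      obtain ⟨n, hn⟩ := exists_nat_gt (((ε : ℝ≥0)⁻¹ : ℝ≥0) : ℝ)
      have hεn : ((n:ℝ≥0∞)+1)⁻¹ ≤ (ε : ℝ≥0∞) := by
        rw [ENNReal.inv_le_iff_inv_le, ← ENNReal.coe_inv (by exact_mod_cast hε.ne')]
        refine le_trans ?_ le_self_add
        exact_mod_cast hn.le
      calc μ (range f) ≤ μ (F n) + ((n:ℝ≥0∞)+1)⁻¹ := hFle n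
        _ ≤ μ B + ε := add_le_add (measure_mono (subset_iUnion F n)) hεn
    have hnull : μ (toMeasurable μ (range f) \ B) = 0 := by
      rw [measure_diff (hBsub.trans (subset_toMeasurable μ _))
        hBm.nullMeasurableSet (ne_of_lt (lt_of_le_of_lt (measure_mono hBsub) (measure_lt_top μ _)))]
      rw [measure_toMeasurable, hBeq, tsub_self]
    refine hBm.nullMeasurableSet.congr (EventuallyEq.symm ?_)
    rw [Filter.eventuallyEq_set]
    have : ∀ᵐ x ∂μ, x ∉ toMeasurable μ (range f) \ B := by
      rw [MeasureTheory.ae_iff]; simp only [not_not]; exact hnull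
    filter_upwards [this] with x hx
    constructor
    · intro hxA
      by_contra hxB
      exact hx ⟨subset_toMeasurable μ _ hxA, hxB⟩
    · exact fun hxB => hBsub hxB

/-- **Luzin's theorem**: analytic sets are universally measurable. -/
theorem analyticSet_nullMeasurableSet {A : Set α}
    (hA : MeasureTheory.AnalyticSet A) (μ : Measure α) [SigmaFinite μ] :
    NullMeasurableSet A μ := by
  set S : ℕ → Set α := spanningSets μ with hS
  have hrest : ∀ n : ℕ, NullMeasurableSet A (μ.restrict (S n)) := by
    intro n
    haveI : Fact (μ (S n) < ⊤) := ⟨measure_spanningSets_lt_top μ n⟩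
    exact analyticSet_nullMeasurableSet_finite hA (μ.restrict (S n))
  have ht : ∀ n : ℕ, ∃ t : Set α, MeasurableSet t ∧ μ ((A \ t ∪ t \ A) ∩ S n) = 0 := by
    intro n
    obtain ⟨t, htm, hteq⟩ := hrest n
    refine ⟨t, htm, ?_⟩
    have : (μ.restrict (S n)) (A \ t ∪ t \ A) = 0 := by
      rw [measure_union_null_iff]
      rw [Filter.eventuallyEq_set] at hteq
      constructor
      · rw [MeasureTheory.measure_eq_zero_iff_ae_notMem]
        filter_upwards [hteq] with x hx hmem
        exact hmem.2 (hx.1 hmem.1)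
      · rw [MeasureTheory.measure_eq_zero_iff_ae_notMem]
        filter_upwards [hteq] with x hx hmem
        exact hmem.2 (hx.2 hmem.1)
    rwa [Measure.restrict_apply' (measurableSet_spanningSets μ n)] at this
  choose t htm htnull using ht
  set D : ℕ → Set α := disjointed S with hD
  have hDm : ∀ n, MeasurableSet (D n) := .disjointed (measurableSet_spanningSets μ)
  set T : Set α := ⋃ n, t n ∩ D n with hT
  have hTm : MeasurableSet T := MeasurableSet.iUnion fun n => (htm n).inter (hDm n)
  refine hTm.nullMeasurableSet.congr (EventuallyEq.symm ?_)
  have hsub : (A \ T ∪ T \ A) ⊆ ⋃ n, (A \ t n ∪ t n \ A) ∩ S n := by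
    intro x hx
    have hxD : ∃ n, x ∈ D n := by
      have : x ∈ ⋃ n, D n := by
        rw [hD, iUnion_disjointed, hS, iUnion_spanningSets]; trivial
      simpa using this
    obtain ⟨n, hn⟩ := hxD
    have hnS : x ∈ S n := disjointed_subset S n hn
    rcases hx with ⟨hxA, hxT⟩ | ⟨hxT, hxA⟩
    · have hxt : x ∉ t n := fun h => hxT (mem_iUnion.2 ⟨n, h, hn⟩)
      exact mem_iUnion.2 ⟨n, Or.inl ⟨hxA, hxt⟩, hnS⟩
    · obtain ⟨m, hxm⟩ := mem_iUnion.1 hxT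
      exact mem_iUnion.2 ⟨m, Or.inr ⟨hxm.1, hxA⟩, disjointed_subset S m hxm.2⟩
  have hnull : μ (A \ T ∪ T \ A) = 0 :=
    measure_mono_null hsub (by
      rw [measure_iUnion_null_iff]; exact fun n => htnull n)
  rw [measure_union_null_iff] at hnull
  rw [Filter.eventuallyEq_set]
  have h1 := MeasureTheory.measure_eq_zero_iff_ae_notMem.1 hnull.1
  have h2 := MeasureTheory.measure_eq_zero_iff_ae_notMem.1 hnull.2
  filter_upwards [h1, h2] with x hx1 hx2
  constructor
  · intro hxA; by_contra hxT; exact hx1 ⟨hxA, hxT⟩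
  · intro hxT; by_contra hxA; exact hx2 ⟨hxT, hxA⟩

lemma aemeasurable_of_sublevel_nullMeasurable {β : Type*} [MeasurableSpace β] {μ : Measure β}
    {f : β → ℝ≥0∞} (h : ∀ c : ℝ≥0∞, NullMeasurableSet {x | f x < c} μ) :
    AEMeasurable f μ := by
  have hnm : NullMeasurable f μ := by
    intro s hs
    have hs' : MeasurableSet[MeasurableSpace.generateFrom (Set.range Set.Iio)] s := by
      rwa [← borel_eq_generateFrom_Iio, ← BorelSpace.measurable_eq (α := ℝ≥0∞)]
    refine MeasurableSpace.generateFrom_induction (Set.range Set.Iio)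
      (fun t _ => NullMeasurableSet (f ⁻¹' t) μ) ?_ (by simp) ?_ ?_ s hs'
    · rintro t ⟨c, rfl⟩ _
      exact h c
    · intro t _ ht
      rw [preimage_compl]; exact ht.compl
    · intro g _ hg
      rw [preimage_iUnion]; exact NullMeasurableSet.iUnion hg
  exact hnm.aemeasurable

end Luzin

section Encoding
open scoped NNReal

-- ### Part 2: encoding
abbrev I01 : Type := ↥(Set.Icc (0:ℝ) 1)

def projI : ℝ → I01 := fun t => Set.projIcc 0 1 zero_le_one t

lemma continuous_projI : Continuous projI := continuous_projIcc (h := zero_le_one)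

def i0 : I01 := ⟨0, by constructor <;> norm_num⟩
def i1 : I01 := ⟨1, by constructor <;> norm_num⟩

/-- change of variables -/
lemma lintegral_Icc_comp_mul {l : ℝ} (hl : 0 < l) (h : ℝ → ℝ≥0∞) :
    ∫⁻ t in Set.Icc 0 l, h t = ∫⁻ s in Set.Icc (0:ℝ) 1, ENNReal.ofReal l * h (l * s) := by
  have hne : l ≠ 0 := hl.ne'
  have me : MeasurableEmbedding (fun s : ℝ => l * s) :=
    (Homeomorph.mulLeft₀ l hne).measurableEmbedding
  have hmap : Measure.map (fun s : ℝ => l * s) volume = ENNReal.ofReal |l⁻¹| • volume := by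
    simpa using Real.map_volume_mul_left hne
  have hvol : (volume : Measure ℝ) =
      ENNReal.ofReal l • Measure.map (fun s : ℝ => l * s) volume := by
    rw [hmap, smul_smul, ← ENNReal.ofReal_mul hl.le, abs_of_pos (inv_pos.2 hl),
      mul_inv_cancel₀ hne, ENNReal.ofReal_one, one_smul]
  have hpre : (fun s : ℝ => l * s) ⁻¹' (Set.Icc 0 l) = Set.Icc (0:ℝ) 1 := by
    ext s
    simp only [mem_preimage, mem_Icc]
    constructor
    · rintro ⟨h1, h2⟩
      exact ⟨nonneg_of_mul_nonneg_right h1 hl, by nlinarith⟩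
    · rintro ⟨h1, h2⟩
      constructor
      · positivity
      · nlinarith
  calc ∫⁻ t in Set.Icc 0 l, h t
      = ∫⁻ t, h t ∂((ENNReal.ofReal l • Measure.map (fun s : ℝ => l * s) volume).restrict (Set.Icc 0 l)) := by
        rw [← hvol]
    _ = ENNReal.ofReal l * ∫⁻ t, h t ∂((Measure.map (fun s : ℝ => l * s) volume).restrict (Set.Icc 0 l)) := by
        rw [Measure.restrict_smul, lintegral_smul_measure, smul_eq_mul]
    _ = ENNReal.ofReal l * ∫⁻ t, h t ∂(Measure.map (fun s : ℝ => l * s) (volume.restrict (Set.Icc (0:ℝ) 1))) := by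
        rw [Measure.restrict_map me.measurable measurableSet_Icc, hpre]
    _ = ENNReal.ofReal l * ∫⁻ s in Set.Icc (0:ℝ) 1, h (l * s) := by
        rw [me.lintegral_map]
    _ = ∫⁻ s in Set.Icc (0:ℝ) 1, ENNReal.ofReal l * h (l * s) := by
        rw [lintegral_const_mul' _ _ ENNReal.ofReal_ne_top]

def curveF (ρ : X → ℝ≥0∞) (p : ℝ × C(I01, X)) : ℝ≥0∞ :=
  ∫⁻ s in Set.Icc (0:ℝ) 1, ENNReal.ofReal p.1 * ρ (p.2 (projI s))

section mk
variable {l : ℝ} (hl : 0 ≤ l) (g : C(I01, X))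
  (hg : ∀ s t : I01, dist (g s) (g t) ≤ l * dist (s:ℝ) (t:ℝ))

def mkCurve : Curve X where
  l := l
  l_nonneg := hl
  toFun := fun t => g (projI (t / l))
  lip := by
    apply LipschitzOnWith.of_dist_le_mul
    intro x hx y hy
    rcases eq_or_lt_of_le hl with rfl | hl'
    · have hx0 : x = 0 := le_antisymm hx.2 hx.1
      have hy0 : y = 0 := le_antisymm hy.2 hy.1
      simp [hx0, hy0]
    · have hproj : dist (projI (x/l)) (projI (y/l)) ≤ dist (x/l) (y/l) := by
        simpa [projI] using (LipschitzWith.dist_le_mul (LipschitzWith.projIcc (a := (0:ℝ)) (b := 1) zero_le_one) (x/l) (y/l))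
      calc dist (g (projI (x/l))) (g (projI (y/l)))
          ≤ l * dist ((projI (x/l) : I01) : ℝ) ((projI (y/l) : I01) : ℝ) := hg _ _
        _ = l * dist (projI (x/l)) (projI (y/l)) := by rw [Subtype.dist_eq]
        _ ≤ l * dist (x/l) (y/l) := by
            exact mul_le_mul_of_nonneg_left hproj hl
        _ = l * (dist x y / l) := by
            rw [Real.dist_eq, Real.dist_eq, div_sub_div_same, abs_div, abs_of_pos hl']
        _ = dist x y := by field_simp
        _ = (1:ℝ≥0) * dist x y := by rw [NNReal.coe_one, one_mul]

lemma mkCurve_start : (mkCurve hl g hg).toFun 0 = g i0 := by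
  show g (projI (0 / l)) = g i0
  rw [zero_div]
  congr 1
  rw [projI, Set.projIcc_left]
  rfl

lemma mkCurve_end : (mkCurve hl g hg).toFun (mkCurve hl g hg).l = g i1 := by
  show g (projI (l / l)) = g i1
  rcases eq_or_lt_of_le hl with rfl | hl'
  · have : dist (g i0) (g i1) ≤ 0 := by simpa [i0, i1] using hg i0 i1
    have heq : g i0 = g i1 := by
      rw [← dist_le_zero]; exact this
    rw [zero_div, ← heq]
    rw [projI, Set.projIcc_left]
    rfl
  · rw [div_self hl'.ne']
    congr 1
    rw [projI, Set.projIcc_right]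
    rfl

lemma mkCurve_integral (ρ : X → ℝ≥0∞) :
    (mkCurve hl g hg).integral ρ = curveF ρ (l, g) := by
  rcases eq_or_lt_of_le hl with rfl | hl'
  · have h0 : (volume : Measure ℝ) (Set.Icc (0:ℝ) 0) = 0 := by simp
    rw [Curve.integral, curveF]
    show ∫⁻ t in Set.Icc (0:ℝ) 0, _ = _
    rw [Measure.restrict_eq_zero.2 h0, lintegral_zero_measure]
    symm
    simp only [ENNReal.ofReal_zero, zero_mul]
    exact lintegral_zero
  · rw [Curve.integral, curveF]
    show ∫⁻ t in Set.Icc 0 l, ρ (g (projI (t / l))) = _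
    rw [lintegral_Icc_comp_mul hl' (fun t => ρ (g (projI (t / l))))]
    congr 1
    funext s
    rw [mul_div_cancel_left₀ _ hl'.ne']

end mk

section gOf
variable (γ : Curve X)

lemma gOf_lip : ∀ s t : I01, dist (γ.toFun (γ.l * s)) (γ.toFun (γ.l * t)) ≤ γ.l * dist (s:ℝ) (t:ℝ) := by
  intro s t
  have hs : γ.l * (s:ℝ) ∈ Set.Icc 0 γ.l := by
    constructor
    · exact mul_nonneg γ.l_nonneg s.2.1
    · calc γ.l * (s:ℝ) ≤ γ.l * 1 := mul_le_mul_of_nonneg_left s.2.2 γ.l_nonneg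
        _ = γ.l := mul_one _
  have ht : γ.l * (t:ℝ) ∈ Set.Icc 0 γ.l := by
    constructor
    · exact mul_nonneg γ.l_nonneg t.2.1
    · calc γ.l * (t:ℝ) ≤ γ.l * 1 := mul_le_mul_of_nonneg_left t.2.2 γ.l_nonneg
        _ = γ.l := mul_one _
  calc dist (γ.toFun (γ.l * s)) (γ.toFun (γ.l * t))
      ≤ (1:ℝ≥0) * dist (γ.l * (s:ℝ)) (γ.l * (t:ℝ)) := γ.lip.dist_le_mul _ hs _ ht
    _ = dist (γ.l * (s:ℝ)) (γ.l * (t:ℝ)) := by rw [NNReal.coe_one, one_mul]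
    _ = γ.l * dist (s:ℝ) (t:ℝ) := by
        rw [Real.dist_eq, Real.dist_eq, ← mul_sub, abs_mul, abs_of_nonneg γ.l_nonneg]

lemma mem_Icc_mul (s : I01) : γ.l * (s:ℝ) ∈ Set.Icc 0 γ.l := by
  constructor
  · exact mul_nonneg γ.l_nonneg s.2.1
  · calc γ.l * (s:ℝ) ≤ γ.l * 1 := mul_le_mul_of_nonneg_left s.2.2 γ.l_nonneg
      _ = γ.l := mul_one _

def gOf : C(I01, X) where
  toFun := fun s => γ.toFun (γ.l * s)
  continuous_toFun := by
    exact ContinuousOn.comp_continuous (γ.lip.continuousOn)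
      (continuous_const.mul continuous_subtype_val) (fun s => mem_Icc_mul γ s)

lemma gOf_start : gOf γ i0 = γ.toFun 0 := by
  show γ.toFun (γ.l * ((0:ℝ))) = γ.toFun 0
  rw [mul_zero]

lemma gOf_end : gOf γ i1 = γ.toFun γ.l := by
  show γ.toFun (γ.l * ((1:ℝ))) = γ.toFun γ.l
  rw [mul_one]

lemma gOf_integral (ρ : X → ℝ≥0∞) : curveF ρ (γ.l, gOf γ) = γ.integral ρ := by
  rcases eq_or_lt_of_le γ.l_nonneg with h0 | hl'
  · have h0' : (volume : Measure ℝ) (Set.Icc (0:ℝ) γ.l) = 0 := by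
      rw [← h0]; simp
    rw [Curve.integral, curveF]
    rw [Measure.restrict_eq_zero.2 h0', lintegral_zero_measure]
    show ∫⁻ s in Set.Icc (0:ℝ) 1, ENNReal.ofReal γ.l * _ = _
    rw [← h0]
    simp only [ENNReal.ofReal_zero, zero_mul]
    exact lintegral_zero
  · rw [Curve.integral, curveF]
    rw [lintegral_Icc_comp_mul hl' (fun t => ρ (γ.toFun t))]
    apply setLIntegral_congr_fun measurableSet_Icc
    intro s hs
    show ENNReal.ofReal γ.l * ρ ((gOf γ) (projI s)) = ENNReal.ofReal γ.l * ρ (γ.toFun (γ.l * s))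
    congr 2
    show γ.toFun (γ.l * ((projI s : I01) : ℝ)) = γ.toFun (γ.l * s)
    rw [projI, Set.projIcc_of_mem zero_le_one hs]

end gOf

section main
variable [CompleteSpace X] [TopologicalSpace.SeparableSpace X]

lemma analytic_sublevel (U : Set X) (hU : MeasureTheory.AnalyticSet Uᶜ)
    {ρ : X → ℝ≥0∞} (hρ : Measurable ρ) (c : ℝ≥0∞) :
    MeasureTheory.AnalyticSet {x | uRho U ρ x < c} := by
  classical
  letI : MeasurableSpace C(I01, X) := borel _
  haveI : BorelSpace C(I01, X) := ⟨rfl⟩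
  set L : Set (ℝ × C(I01, X)) :=
    {p | 0 ≤ p.1 ∧ ∀ s t : I01, dist (p.2 s) (p.2 t) ≤ p.1 * dist (s:ℝ) (t:ℝ)} with hL
  have hclosed : IsClosed L := by
    rw [hL]
    have : {p : ℝ × C(I01, X) | 0 ≤ p.1 ∧ ∀ s t : I01, dist (p.2 s) (p.2 t) ≤ p.1 * dist (s:ℝ) (t:ℝ)}
        = {p : ℝ × C(I01, X) | 0 ≤ p.1} ∩
          ⋂ (s : I01), ⋂ (t : I01), {p : ℝ × C(I01, X) | dist (p.2 s) (p.2 t) ≤ p.1 * dist (s:ℝ) (t:ℝ)} := by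
      ext p
      constructor
      · rintro ⟨h1, h2⟩
        exact ⟨h1, mem_iInter.2 fun s => mem_iInter.2 fun t => h2 s t⟩
      · rintro ⟨h1, h2⟩
        exact ⟨h1, fun s t => mem_iInter.1 (mem_iInter.1 h2 s) t⟩
    rw [this]
    apply IsClosed.inter
    · exact isClosed_le continuous_const continuous_fst
    · apply isClosed_iInter; intro s; apply isClosed_iInter; intro t
      apply isClosed_le
      · exact Continuous.dist ((continuous_eval_const (F := C(I01, X)) s).comp continuous_snd)
          ((continuous_eval_const (F := C(I01, X)) t).comp continuous_snd)
      · exact continuous_fst.mul continuous_const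
  have hFmeas : Measurable (curveF ρ) := by
    have hcont : Continuous fun q : (ℝ × C(I01,X)) × ℝ => q.1.2 (projI q.2) :=
      (continuous_eval (F := C(I01, X))).comp
        ((continuous_snd.comp continuous_fst).prodMk (continuous_projI.comp continuous_snd))
    have hint : Measurable fun q : (ℝ × C(I01,X)) × ℝ => ENNReal.ofReal q.1.1 * ρ (q.1.2 (projI q.2)) :=
      (ENNReal.measurable_ofReal.comp ((measurable_fst.comp measurable_fst))).mul
        (hρ.comp hcont.measurable)
    exact Measurable.lintegral_prod_right' (f := fun (q : (ℝ × C(I01,X)) × ℝ) =>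
      ENNReal.ofReal q.1.1 * ρ (q.1.2 (projI q.2))) hint
  set A : Set (ℝ × C(I01, X)) :=
    (L ∩ {p | curveF ρ p < c}) ∩ ((fun p : ℝ × C(I01,X) => p.2 i1) ⁻¹' Uᶜ) with hA
  have hAan : MeasureTheory.AnalyticSet A := by
    have h1 : MeasureTheory.AnalyticSet (L ∩ {p | curveF ρ p < c}) := by
      apply MeasurableSet.analyticSet
      exact hclosed.measurableSet.inter (hFmeas measurableSet_Iio)
    have h2 : MeasureTheory.AnalyticSet ((fun p : ℝ × C(I01,X) => p.2 i1) ⁻¹' Uᶜ) :=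
      hU.preimage ((continuous_eval_const (F := C(I01, X)) i1).comp continuous_snd)
    rw [hA, Set.inter_eq_iInter]
    apply MeasureTheory.AnalyticSet.iInter
    intro b; cases b
    · exact h2
    · exact h1
  have himg : {x | uRho U ρ x < c} = (fun p : ℝ × C(I01,X) => p.2 i0) '' A := by
    ext x
    simp only [mem_setOf_eq, mem_image]
    constructor
    · intro hx
      rw [uRho, iInf_lt_iff] at hx
      obtain ⟨γ, hγ⟩ := hx
      rw [iInf_lt_iff] at hγ
      obtain ⟨⟨hstart, hend⟩, hint⟩ := hγ
      refine ⟨(γ.l, gOf γ), ⟨⟨⟨γ.l_nonneg, gOf_lip γ⟩, ?_⟩, ?_⟩, ?_⟩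
      · show curveF ρ (γ.l, gOf γ) < c
        rw [gOf_integral]; exact hint
      · show gOf γ i1 ∈ Uᶜ
        rw [gOf_end]; exact hend
      · show gOf γ i0 = x
        rw [gOf_start]; exact hstart
    · rintro ⟨p, ⟨⟨⟨hp1, hplip⟩, hpF⟩, hpend⟩, hpx⟩
      set γ : Curve X := mkCurve hp1 p.2 hplip with hγ
      have hcond : γ.toFun 0 = x ∧ γ.toFun γ.l ∈ Uᶜ := by
        constructor
        · rw [hγ, mkCurve_start]; exact hpx
        · rw [hγ, mkCurve_end]; exact hpend
      have hle : uRho U ρ x ≤ γ.integral ρ := iInf₂_le γ hcond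
      refine lt_of_le_of_lt hle ?_
      rw [hγ, mkCurve_integral]
      exact hpF
  rw [himg]
  exact hAan.image_of_continuous ((continuous_eval_const (F := C(I01, X)) i0).comp continuous_snd)

end main

end Encoding

/-- If `X` is complete and separable, `U` is coanalytic and `ρ` is Borel, then
`u_ρ` is universally measurable: it is measurable with respect to every `σ`-finite
Borel measure on `X`. -/
theorem stmt9 [CompleteSpace X] [TopologicalSpace.SeparableSpace X]
    (U : Set X) (hU : MeasureTheory.AnalyticSet Uᶜ)
    (ρ : X → ℝ≥0∞) (hρ : Measurable ρ) :
    ∀ μ : Measure X, SigmaFinite μ → AEMeasurable (uRho U ρ) μ := by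
  intro μ hμ
  haveI := hμ
  apply aemeasurable_of_sublevel_nullMeasurable
  intro c
  exact analyticSet_nullMeasurableSet (analytic_sublevel U hU hρ c) μ

end
end

section
/- Let X be a locally compact metric space with Borel measure finite on balls, and let U ⊂ X be quasiopen. If u : U → [-∞,∞] is C_p-quasicontinuous, then u is finite q.e. and for every α ∈ R the superlevel set U_α = {x ∈ U : u(x) > α} and the sublevel set V_α = {x ∈ U : u(x) < α} are quasiopen in X. -/
open Set MeasureTheory Metric ENNReal

noncomputable section

variable {X : Type*} [MetricSpace X] [MeasurableSpace X] [BorelSpace X]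

section Helpers

variable {X : Type*} [MetricSpace X] [MeasurableSpace X] [BorelSpace X]

lemma capacity_mono (μ : Measure X) (p : ℝ) {E F : Set X} (h : E ⊆ F) :
    capacity μ p E ≤ capacity μ p F :=
  le_iInf fun f => le_iInf fun hf => iInf₂_le f ⟨hf.1, fun x hx => hf.2 x (h hx)⟩

lemma measurable_ereal_abs : Measurable EReal.abs :=
  EReal.measurable_of_measurable_real
    (ENNReal.measurable_ofReal.comp continuous_abs.measurable)

lemma toReal_sup_of_ne {a b : EReal} (ha : a ≠ ⊤) (ha' : a ≠ ⊥) (hb : b ≠ ⊤) (hb' : b ≠ ⊥) :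
    (a ⊔ b).toReal = a.toReal ⊔ b.toReal := by
  rcases le_total a b with h | h
  · rw [sup_eq_right.2 h, sup_eq_right.2 (EReal.toReal_le_toReal h ha' hb)]
  · rw [sup_eq_left.2 h, sup_eq_left.2 (EReal.toReal_le_toReal h hb' ha)]

lemma erealDiff_sup_le (a b c d : EReal) :
    erealDiff (a ⊔ c) (b ⊔ d) ≤ erealDiff a b ⊔ erealDiff c d := by
  by_cases hab : a = ⊤ ∨ a = ⊥ ∨ b = ⊤ ∨ b = ⊥
  · have : erealDiff a b = ⊤ := by rw [erealDiff, if_pos hab]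
    exact le_trans le_top (le_trans this.ge (le_max_left _ _))
  by_cases hcd : c = ⊤ ∨ c = ⊥ ∨ d = ⊤ ∨ d = ⊥
  · have : erealDiff c d = ⊤ := by rw [erealDiff, if_pos hcd]
    exact le_trans le_top (le_trans this.ge (le_max_right _ _))
  push_neg at hab hcd
  obtain ⟨ha, ha', hb, hb'⟩ := hab
  obtain ⟨hc, hc', hd, hd'⟩ := hcd
  have hac : a ⊔ c ≠ ⊤ ∧ a ⊔ c ≠ ⊥ := by
    rcases max_choice a c with h | h <;> rw [h] <;> exact ⟨‹_›, ‹_›⟩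
  have hbd : b ⊔ d ≠ ⊤ ∧ b ⊔ d ≠ ⊥ := by
    rcases max_choice b d with h | h <;> rw [h] <;> exact ⟨‹_›, ‹_›⟩
  rw [erealDiff, if_neg (by push_neg; exact ⟨hac.1, hac.2, hbd.1, hbd.2⟩),
    erealDiff, if_neg (by push_neg; exact ⟨ha, ha', hb, hb'⟩),
    erealDiff, if_neg (by push_neg; exact ⟨hc, hc', hd, hd'⟩)]
  have key : |(a ⊔ c).toReal - (b ⊔ d).toReal| ≤
      |a.toReal - b.toReal| ⊔ |c.toReal - d.toReal| := by
    rw [toReal_sup_of_ne ha ha' hc hc', toReal_sup_of_ne hb hb' hd hd']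
    exact abs_max_sub_max_le_max _ _ _ _
  rcases le_total |a.toReal - b.toReal| |c.toReal - d.toReal| with h | h
  · exact le_trans (ENNReal.ofReal_le_ofReal (key.trans (sup_eq_right.2 h).le))
      (le_max_right _ _)
  · exact le_trans (ENNReal.ofReal_le_ofReal (key.trans (sup_eq_left.2 h).le))
      (le_max_left _ _)

lemma isUpperGradientOn_sup {f g : X → EReal} {rf rg : X → ℝ≥0∞}
    (hf : IsUpperGradientOn f rf Set.univ) (hg : IsUpperGradientOn g rg Set.univ) :
    IsUpperGradientOn (fun x => f x ⊔ g x) (fun x => rf x + rg x) Set.univ := by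
  refine ⟨hf.1.add hg.1, fun γ hγU hγ => ?_⟩
  have h1 := hf.2 γ hγU hγ
  have h2 := hg.2 γ hγU hγ
  have hmeas : AEMeasurable (fun t => rf (γ.toFun t))
      (MeasureTheory.volume.restrict (Set.Icc 0 γ.l)) :=
    hf.1.comp_aemeasurable (γ.lip.continuousOn.aemeasurable measurableSet_Icc)
  calc erealDiff (f (γ.toFun 0) ⊔ g (γ.toFun 0)) (f (γ.toFun γ.l) ⊔ g (γ.toFun γ.l))
      ≤ erealDiff (f (γ.toFun 0)) (f (γ.toFun γ.l)) ⊔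
        erealDiff (g (γ.toFun 0)) (g (γ.toFun γ.l)) := erealDiff_sup_le _ _ _ _
    _ ≤ γ.integral rf ⊔ γ.integral rg := sup_le_sup h1 h2
    _ ≤ γ.integral rf + γ.integral rg := sup_le le_self_add le_add_self
    _ = γ.integral (fun x => rf x + rg x) :=
        (MeasureTheory.lintegral_add_left' hmeas _).symm

lemma capacity_union_le (μ : Measure X) {p : ℝ} (hp : 1 ≤ p) {A B : Set X} {δ : ℝ≥0∞}
    (hδ : δ ≠ ⊤) (hA : capacity μ p A < δ) (hB : capacity μ p B < δ) :
    capacity μ p (A ∪ B) ≤ (2 + 2 * (2 : ℝ≥0∞) ^ p) * δ := by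
  have hp0 : (0 : ℝ) ≤ p := le_trans zero_le_one hp
  obtain ⟨f, hf⟩ := iInf_lt_iff.mp hA
  obtain ⟨hfc, hNf⟩ := iInf_lt_iff.mp hf
  obtain ⟨g, hg⟩ := iInf_lt_iff.mp hB
  obtain ⟨hgc, hNg⟩ := iInf_lt_iff.mp hg
  rw [newtonianNormOn] at hNf hNg
  have hAf : (∫⁻ x in Set.univ, (f x).abs ^ p ∂μ) ≤ δ := (lt_of_le_of_lt le_self_add hNf).le
  have hAg : (∫⁻ x in Set.univ, (g x).abs ^ p ∂μ) ≤ δ := (lt_of_le_of_lt le_self_add hNg).le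
  have hIf : (⨅ (ρ : X → ℝ≥0∞) (_ : IsUpperGradientOn f ρ Set.univ),
      ∫⁻ x in Set.univ, (ρ x) ^ p ∂μ) < δ := lt_of_le_of_lt le_add_self hNf
  have hIg : (⨅ (ρ : X → ℝ≥0∞) (_ : IsUpperGradientOn g ρ Set.univ),
      ∫⁻ x in Set.univ, (ρ x) ^ p ∂μ) < δ := lt_of_le_of_lt le_add_self hNg
  obtain ⟨rf, hrf⟩ := iInf_lt_iff.mp hIf
  obtain ⟨hrfu, hrfi⟩ := iInf_lt_iff.mp hrf
  obtain ⟨rg, hrg⟩ := iInf_lt_iff.mp hIg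
  obtain ⟨hrgu, hrgi⟩ := iInf_lt_iff.mp hrg
  have habs : AEMeasurable (fun x => (f x).abs ^ p) (μ.restrict Set.univ) :=
    (measurable_ereal_abs.comp_aemeasurable hfc.1).pow aemeasurable_const
  have hmax : capacity μ p (A ∪ B) ≤
      newtonianNormOn μ p Set.univ (fun x => f x ⊔ g x) := by
    refine iInf₂_le _ ⟨hfc.1.sup hgc.1, fun x hx => ?_⟩
    rcases hx with hx | hx
    · exact le_trans (hfc.2 x hx) le_sup_left
    · exact le_trans (hgc.2 x hx) le_sup_right
  have habs_le : (∫⁻ x in Set.univ, ((f x ⊔ g x).abs) ^ p ∂μ) ≤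
      (∫⁻ x in Set.univ, (f x).abs ^ p ∂μ) + (∫⁻ x in Set.univ, (g x).abs ^ p ∂μ) := by
    rw [← MeasureTheory.lintegral_add_left' habs]
    refine MeasureTheory.lintegral_mono fun x => ?_
    rcases max_choice (f x) (g x) with h | h <;> rw [h]
    · exact le_self_add
    · exact le_add_self
  have hgrad_le : (⨅ (ρ : X → ℝ≥0∞) (_ : IsUpperGradientOn (fun x => f x ⊔ g x) ρ Set.univ),
      ∫⁻ x in Set.univ, (ρ x) ^ p ∂μ) ≤
      (2 : ℝ≥0∞) ^ p * ((∫⁻ x in Set.univ, (rf x) ^ p ∂μ) +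
        (∫⁻ x in Set.univ, (rg x) ^ p ∂μ)) := by
    refine le_trans (iInf₂_le (fun x => rf x + rg x) (isUpperGradientOn_sup hrfu hrgu)) ?_
    have hpt : ∀ x, (rf x + rg x) ^ p ≤ (2 : ℝ≥0∞) ^ p * ((rf x) ^ p + (rg x) ^ p) := by
      intro x
      have h1 : rf x + rg x ≤ 2 * (rf x ⊔ rg x) := by
        rw [two_mul]; exact add_le_add le_sup_left le_sup_right
      calc (rf x + rg x) ^ p ≤ (2 * (rf x ⊔ rg x)) ^ p := ENNReal.rpow_le_rpow h1 hp0
        _ = (2 : ℝ≥0∞) ^ p * (rf x ⊔ rg x) ^ p := ENNReal.mul_rpow_of_nonneg _ _ hp0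
        _ ≤ (2 : ℝ≥0∞) ^ p * ((rf x) ^ p + (rg x) ^ p) := by
            refine mul_le_mul_right ?_ _
            rcases max_choice (rf x) (rg x) with h | h <;> rw [h]
            · exact le_self_add
            · exact le_add_self
    calc (∫⁻ x in Set.univ, (rf x + rg x) ^ p ∂μ)
        ≤ ∫⁻ x in Set.univ, (2 : ℝ≥0∞) ^ p * ((rf x) ^ p + (rg x) ^ p) ∂μ :=
          MeasureTheory.lintegral_mono hpt
      _ = (2 : ℝ≥0∞) ^ p * ∫⁻ x in Set.univ, ((rf x) ^ p + (rg x) ^ p) ∂μ :=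
          MeasureTheory.lintegral_const_mul' _ _ (ENNReal.rpow_ne_top_of_nonneg hp0 (by norm_num))
      _ = (2 : ℝ≥0∞) ^ p * ((∫⁻ x in Set.univ, (rf x) ^ p ∂μ) +
            (∫⁻ x in Set.univ, (rg x) ^ p ∂μ)) := by
          rw [MeasureTheory.lintegral_add_left (hrfu.1.pow measurable_const)]
  calc capacity μ p (A ∪ B) ≤ newtonianNormOn μ p Set.univ (fun x => f x ⊔ g x) := hmax
    _ ≤ (δ + δ) + (2 : ℝ≥0∞) ^ p * (δ + δ) := by
        rw [newtonianNormOn]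
        refine add_le_add (habs_le.trans (add_le_add hAf hAg)) (hgrad_le.trans ?_)
        exact mul_le_mul_right (add_le_add hrfi.le hrgi.le) _
    _ = (2 + 2 * (2 : ℝ≥0∞) ^ p) * δ := by ring

lemma quasiopen_level (μ : Measure X) {p : ℝ} (hp : 1 ≤ p) {U : Set X}
    (hU : Quasiopen μ p U) {u : X → EReal} (hu : QuasicontOn μ p u U)
    {T : Set EReal} (hT : IsOpen T) : Quasiopen μ p {x ∈ U | u x ∈ T} := by
  intro ε hε
  have hp0 : (0 : ℝ) ≤ p := le_trans zero_le_one hp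
  set c : ℝ≥0∞ := 2 + 2 * (2 : ℝ≥0∞) ^ p with hc
  have h2p : (2 : ℝ≥0∞) ^ p ≠ ⊤ := ENNReal.rpow_ne_top_of_nonneg hp0 (by norm_num)
  have hcT : c ≠ ⊤ :=
    ENNReal.add_ne_top.2 ⟨by norm_num, ENNReal.mul_ne_top (by norm_num) h2p⟩
  have hc0 : c ≠ 0 := by simp [hc]
  obtain ⟨δ, hδ0, hδT, hδε⟩ : ∃ δ : ℝ≥0∞, 0 < δ ∧ δ ≠ ⊤ ∧ c * δ < ε := by
    by_cases hεT : ε = ⊤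
    · refine ⟨1, one_pos, ENNReal.one_ne_top, ?_⟩
      rw [hεT, mul_one]; exact hcT.lt_top
    · refine ⟨(ε / 2) / c, ?_, ?_, ?_⟩
      · exact ENNReal.div_pos (by simp [hε.ne', hεT]) hcT
      · have hε2 : ε / 2 ≠ ⊤ := by simp [ENNReal.div_eq_top, hεT]
        exact (ENNReal.div_lt_top hε2 hc0).ne
      · exact lt_of_le_of_lt ENNReal.mul_div_le (ENNReal.half_lt_self hε.ne' hεT)
  obtain ⟨G₁, hG₁o, hG₁c, hG₁U⟩ := hU δ hδ0
  obtain ⟨G, hGo, hGc, hGcont, _⟩ := hu δ hδ0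
  refine ⟨G ∪ G₁, hGo.union hG₁o, ?_, ?_⟩
  · exact lt_of_le_of_lt (capacity_union_le μ hp hδT hGc hG₁c) hδε
  · obtain ⟨W, hWo, hW⟩ := continuousOn_iff'.mp hGcont T hT
    have heq : (G ∪ G₁) ∪ {x ∈ U | u x ∈ T} = (G ∪ G₁) ∪ (W ∩ (G₁ ∪ U)) := by
      ext x
      constructor
      · rintro (hx | ⟨hxU, hxT⟩)
        · exact Or.inl hx
        · by_cases hxG : x ∈ G
          · exact Or.inl (Or.inl hxG)
          · have : x ∈ W ∩ (U \ G) := by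
              rw [← hW]; exact ⟨hxT, hxU, hxG⟩
            exact Or.inr ⟨this.1, Or.inr hxU⟩
      · rintro (hx | ⟨hxW, hx⟩)
        · exact Or.inl hx
        · rcases hx with hx | hxU
          · exact Or.inl (Or.inr hx)
          · by_cases hxG : x ∈ G
            · exact Or.inl (Or.inl hxG)
            · have : x ∈ u ⁻¹' T ∩ (U \ G) := by
                rw [hW]; exact ⟨hxW, hxU, hxG⟩
              exact Or.inr ⟨hxU, this.1⟩
    rw [heq]
    exact (hGo.union hG₁o).union (hWo.inter hG₁U)

end Helpers


/-- If `X` is locally compact, `U` quasiopen and `u` is `C_p`-quasicontinuous on `U`,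
then `u` is finite q.e. and all superlevel and sublevel sets of `u` are quasiopen. -/
theorem stmt14 [LocallyCompactSpace X] (μ : Measure X) (p : ℝ) (hp : 1 ≤ p)
    (hball : ∀ (x : X) (r : ℝ), μ (Metric.ball x r) < ⊤)
    (U : Set X) (hU : Quasiopen μ p U) (u : X → EReal)
    (hu : QuasicontOn μ p u U) :
    capacity μ p {x ∈ U | u x = ⊤ ∨ u x = ⊥} = 0 ∧
    ∀ α : ℝ, Quasiopen μ p {x ∈ U | (α : EReal) < u x} ∧
      Quasiopen μ p {x ∈ U | u x < (α : EReal)} := by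
  constructor
  · by_contra h
    have hpos : 0 < capacity μ p {x ∈ U | u x = ⊤ ∨ u x = ⊥} := pos_iff_ne_zero.2 h
    obtain ⟨G, hGo, hGc, hGcont, hGfin⟩ := hu _ hpos
    have hsub : {x ∈ U | u x = ⊤ ∨ u x = ⊥} ⊆ G := by
      intro x hx
      by_contra hxG
      have := hGfin x ⟨hx.1, hxG⟩
      rcases hx.2 with h' | h'
      · exact this.1 h'
      · exact this.2 h'
    exact absurd (lt_of_le_of_lt (capacity_mono μ p hsub) hGc) (lt_irrefl _)
  · intro α
    exact ⟨quasiopen_level μ hp hU hu isOpen_Ioi, quasiopen_level μ hp hU hu isOpen_Iio⟩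

end
end

section
/- Let X be a metric space with Borel measure finite on balls, and let U ⊂ X be quasiopen. If u : U → [-∞,∞] is measurable, finite q.e., and u∘γ is continuous for p-a.e. curve γ : [0,l_γ] → U (curves entirely inside U), then u∘γ is continuous on γ^{-1}(U) for p-a.e. curve γ : [0,l_γ] → X. -/
open Set MeasureTheory Metric ENNReal

noncomputable section

variable {X : Type*} [MetricSpace X] [MeasurableSpace X] [BorelSpace X]

/-- clamp to [0,1] -/
def clampR (r : ℝ) : ℝ := max 0 (min r 1)

lemma clampR_nonneg (r : ℝ) : 0 ≤ clampR r := le_max_left _ _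

lemma clampR_le_one (r : ℝ) : clampR r ≤ 1 := max_le zero_le_one (min_le_right _ _)

lemma clampR_lip (r r' : ℝ) : |clampR r - clampR r'| ≤ |r - r'| := by
  have h1 : |max (min r 1) 0 - max (min r' 1) 0| ≤ |min r 1 - min r' 1| :=
    abs_max_sub_max_le_abs _ _ _
  have h2 : |min r 1 - min r' 1| ≤ max |r - r'| |(1:ℝ) - 1| := abs_min_sub_min_le_max _ _ _ _
  have h3 : max |r - r'| |(1:ℝ) - 1| = |r - r'| := by simp
  calc |clampR r - clampR r'| = |max (min r 1) 0 - max (min r' 1) 0| := by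
        simp [clampR, max_comm]
    _ ≤ |r - r'| := h1.trans (h2.trans_eq h3)

lemma clampR_le_abs (r : ℝ) : clampR r ≤ |r| :=
  max_le (abs_nonneg r) ((min_le_left _ _).trans (le_abs_self r))

def clampE (x : EReal) : ℝ := if x = ⊤ then 1 else clampR x.toReal

lemma clampE_nonneg (x : EReal) : 0 ≤ clampE x := by
  unfold clampE; split <;> [norm_num; exact clampR_nonneg _]

lemma clampE_le_one (x : EReal) : clampE x ≤ 1 := by
  unfold clampE; split
  · exact le_refl 1
  · exact clampR_le_one _

lemma measurable_clampE : Measurable clampE := by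
  unfold clampE
  refine Measurable.ite ?_ measurable_const ?_
  · exact (isClosed_singleton (x := (⊤ : EReal))).measurableSet
  · exact measurable_const.max ((measurable_ereal_toReal).min measurable_const)

lemma clampE_eq_one {x : EReal} (h : 1 ≤ x) : clampE x = 1 := by
  unfold clampE
  split_ifs with ht
  · rfl
  · have h1 : (1 : ℝ) ≤ x.toReal := by
      have := EReal.toReal_le_toReal h (by rw [show (1 : EReal) = ((1:ℝ) : EReal) from rfl]; exact EReal.coe_ne_bot 1) ht
      simpa using this
    simp [clampR, min_eq_right h1]

lemma ofReal_clampE_sub_le (a b : EReal) :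
    ENNReal.ofReal |clampE a - clampE b| ≤ erealDiff a b := by
  unfold erealDiff
  split_ifs with h
  · exact le_top
  · push_neg at h
    obtain ⟨ha1, ha2, hb1, hb2⟩ := h
    have : clampE a = clampR a.toReal := if_neg ha1
    have hb : clampE b = clampR b.toReal := if_neg hb1
    rw [this, hb]
    exact ENNReal.ofReal_le_ofReal (clampR_lip _ _)

lemma ofReal_clampE_le_abs (a : EReal) : ENNReal.ofReal (clampE a) ≤ a.abs := by
  induction a with
  | bot => simp [clampE, clampR]
  | coe r =>
      have : clampE (r : EReal) = clampR r := if_neg (by simp)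
      rw [this, EReal.abs_def]
      exact ENNReal.ofReal_le_ofReal (clampR_le_abs r)
  | top => simp


section AuxCurve

variable {X : Type*} [MetricSpace X]

/-- Subcurve of a curve on `[a, b] ⊆ [0, l]`. -/
def Curve.sub (γ : Curve X) (a b : ℝ) (h0 : 0 ≤ a) (hab : a ≤ b) (hbl : b ≤ γ.l) : Curve X where
  l := b - a
  l_nonneg := by linarith
  toFun := fun r => γ.toFun (r + a)
  lip := by
    intro x hx y hy
    have hx' : x + a ∈ Set.Icc 0 γ.l := ⟨by linarith [hx.1], by linarith [hx.2]⟩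
    have hy' : y + a ∈ Set.Icc 0 γ.l := ⟨by linarith [hy.1], by linarith [hy.2]⟩
    have := γ.lip hx' hy'
    simpa [edist_add_right] using this

lemma lintegral_Icc_shift (f : ℝ → ℝ≥0∞) (a b : ℝ) :
    ∫⁻ r in Set.Icc 0 (b - a), f (r + a) = ∫⁻ r in Set.Icc a b, f r := by
  have hemb : MeasurableEmbedding (fun x : ℝ => x + a) :=
    (Homeomorph.addRight a).measurableEmbedding
  have hmp : MeasurePreserving (fun x : ℝ => x + a) volume volume :=
    measurePreserving_add_right volume a
  calc ∫⁻ r in Set.Icc 0 (b - a), f (r + a)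
      = ∫⁻ r, (Set.Icc 0 (b - a)).indicator (fun r => f (r + a)) r :=
        (lintegral_indicator measurableSet_Icc _).symm
    _ = ∫⁻ r, ((Set.Icc a b).indicator f) (r + a) := by
        apply lintegral_congr
        intro r
        simp only [Set.indicator_apply, Set.mem_Icc]
        exact if_congr (by constructor <;> (intro h; constructor <;> linarith [h.1, h.2])) rfl rfl
    _ = ∫⁻ r, (Set.Icc a b).indicator f r := hmp.lintegral_comp_emb hemb _
    _ = ∫⁻ r in Set.Icc a b, f r := lintegral_indicator measurableSet_Icc _

lemma Curve.sub_integral (γ : Curve X) (a b : ℝ) (h0 : 0 ≤ a) (hab : a ≤ b) (hbl : b ≤ γ.l)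
    (ρ : X → ℝ≥0∞) :
    (γ.sub a b h0 hab hbl).integral ρ = ∫⁻ r in Set.Icc a b, ρ (γ.toFun r) :=
  lintegral_Icc_shift (fun r => ρ (γ.toFun r)) a b

lemma Curve.sub_const (γ : Curve X) (a b : ℝ) (h0 : 0 ≤ a) (hab : a ≤ b) (hbl : b ≤ γ.l)
    (h : ¬ (γ.sub a b h0 hab hbl).Nonconstant) : γ.toFun a = γ.toFun b := by
  unfold Curve.Nonconstant at h
  push_neg at h
  have := h 0 ⟨le_refl 0, by simpa [Curve.sub] using sub_nonneg.mpr hab⟩ (b - a)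
    ⟨by simpa [Curve.sub] using sub_nonneg.mpr hab, by simp [Curve.sub]⟩
  simpa [Curve.sub, sub_add_cancel] using this

end AuxCurve

lemma set_lintegral_congr_on {α : Type*} [MeasurableSpace α] {μ : Measure α} {s : Set α}
    (hs : MeasurableSet s) {f g : α → ℝ≥0∞} (h : ∀ x ∈ s, f x = g x) :
    ∫⁻ x in s, f x ∂μ = ∫⁻ x in s, g x ∂μ := by
  refine le_antisymm (lintegral_mono_ae ?_) (lintegral_mono_ae ?_)
  · rw [ae_restrict_iff' hs]
    exact ae_of_all _ fun x hx => (h x hx).le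
  · rw [ae_restrict_iff' hs]
    exact ae_of_all _ fun x hx => (h x hx).ge

/-- Countable Minkowski inequality for `L^p` bounds. -/
lemma lintegral_tsum_rpow_le {α : Type*} [MeasurableSpace α] (μ : Measure α) {p : ℝ}
    (hp : 1 ≤ p) (h : ℕ → α → ℝ≥0∞) (hm : ∀ j, AEMeasurable (h j) μ) (c : ℕ → ℝ≥0∞)
    (hc : ∀ j, (∫⁻ x, h j x ^ p ∂μ) ≤ c j ^ p) :
    (∫⁻ x, (∑' j, h j x) ^ p ∂μ) ≤ (∑' j, c j) ^ p := by
  have hp0 : 0 < p := lt_of_lt_of_le zero_lt_one hp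
  have hpne : p ≠ 0 := hp0.ne'
  have hrw : ∀ x : ℝ≥0∞, (x ^ p) ^ (1 / p) = x := fun x => by
    rw [← ENNReal.rpow_mul, mul_one_div_cancel hpne, ENNReal.rpow_one]
  have hrw' : ∀ x : ℝ≥0∞, (x ^ (1 / p)) ^ p = x := fun x => by
    rw [← ENNReal.rpow_mul, one_div_mul_cancel hpne, ENNReal.rpow_one]
  set S : ℕ → α → ℝ≥0∞ := fun n x => ∑ j ∈ Finset.range n, h j x with hS
  have hSm : ∀ n, AEMeasurable (S n) μ := fun n => Finset.aemeasurable_fun_sum _ fun j _ => hm j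
  have hSle : ∀ n, (∫⁻ x, S n x ^ p ∂μ) ^ (1 / p) ≤ ∑ j ∈ Finset.range n, c j := by
    intro n
    induction n with
    | zero =>
        have h1 : (0:ℝ≥0∞) ^ p = 0 := ENNReal.zero_rpow_of_pos hp0
        have h2 : (0:ℝ≥0∞) ^ (1/p) = 0 := ENNReal.zero_rpow_of_pos (by positivity)
        simp [hS, h1, h2]
        exact hp0
    | succ n ih =>
        have hstep : (∫⁻ x, (S n x + h n x) ^ p ∂μ) ^ (1 / p) ≤
            (∫⁻ x, S n x ^ p ∂μ) ^ (1 / p) + (∫⁻ x, h n x ^ p ∂μ) ^ (1 / p) :=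
          ENNReal.lintegral_Lp_add_le (hSm n) (hm n) hp
        have h2 : (∫⁻ x, h n x ^ p ∂μ) ^ (1 / p) ≤ c n := by
          have := ENNReal.rpow_le_rpow (hc n) (by positivity : (0:ℝ) ≤ 1 / p)
          rwa [hrw] at this
        calc (∫⁻ x, S (n + 1) x ^ p ∂μ) ^ (1 / p)
            = (∫⁻ x, (S n x + h n x) ^ p ∂μ) ^ (1 / p) := by
              simp only [hS, Finset.sum_range_succ]
          _ ≤ (∫⁻ x, S n x ^ p ∂μ) ^ (1 / p) + (∫⁻ x, h n x ^ p ∂μ) ^ (1 / p) := hstep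
          _ ≤ (∑ j ∈ Finset.range n, c j) + c n := add_le_add ih h2
          _ = ∑ j ∈ Finset.range (n + 1), c j := (Finset.sum_range_succ _ _).symm
  have hmono : ∀ x, Monotone fun n => S n x := fun x m n hmn =>
    Finset.sum_le_sum_of_subset (Finset.range_subset_range.2 hmn)
  have hmeas : ∀ n, AEMeasurable (fun x => S n x ^ p) μ := fun n =>
    ENNReal.continuous_rpow_const.measurable.comp_aemeasurable (hSm n)
  have hlim : (∫⁻ x, (∑' j, h j x) ^ p ∂μ) = ⨆ n, ∫⁻ x, S n x ^ p ∂μ := by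
    have heq : (∫⁻ x, (∑' j, h j x) ^ p ∂μ) = ∫⁻ x, ⨆ n, S n x ^ p ∂μ := by
      apply lintegral_congr
      intro x
      rw [ENNReal.tsum_eq_iSup_nat]
      exact Monotone.map_iSup_of_continuousAt
        (ENNReal.continuous_rpow_const.continuousAt)
        (fun u v huv => ENNReal.rpow_le_rpow huv hp0.le)
        (by simpa using ENNReal.zero_rpow_of_pos hp0)
    rw [heq, lintegral_iSup' hmeas
      (ae_of_all _ fun x m n hmn => ENNReal.rpow_le_rpow (hmono x hmn) hp0.le)]
  rw [hlim]
  refine iSup_le fun n => ?_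
  have := ENNReal.rpow_le_rpow (hSle n) hp0.le
  rw [hrw'] at this
  refine this.trans (ENNReal.rpow_le_rpow ?_ hp0.le)
  exact ENNReal.sum_le_tsum _


/-- If `u` is measurable, finite q.e. on a quasiopen set `U` and `u ∘ γ` is
continuous for `p`-a.e. curve `γ` in `U`, then for `p`-a.e. curve `γ` in `X` the
composition `u ∘ γ` is continuous on `γ⁻¹(U)`. -/
theorem stmt16 (μ : Measure X) (p : ℝ) (hp : 1 ≤ p)
    (hball : ∀ (x : X) (r : ℝ), μ (Metric.ball x r) < ⊤)
    (U : Set X) (hU : Quasiopen μ p U) (u : X → EReal)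
    (hmeas : AEMeasurable u (μ.restrict U))
    (hfin : capacity μ p {x ∈ U | u x = ⊤ ∨ u x = ⊥} = 0)
    (hcurves : ∃ Γ : Set (Curve X), ZeroModulus (μ.restrict U) p Γ ∧
      ∀ γ : Curve X, γ.InSet U → γ ∉ Γ →
        ContinuousOn (fun t => u (γ.toFun t)) (Set.Icc 0 γ.l)) :
    ∃ Γ' : Set (Curve X), ZeroModulus μ p Γ' ∧
      ∀ γ : Curve X, γ ∉ Γ' →
        ContinuousOn (fun t => u (γ.toFun t)) {t ∈ Set.Icc 0 γ.l | γ.toFun t ∈ U} := by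
  classical
  cases isEmpty_or_nonempty X with
  | inl hX =>
      refine ⟨∅, ⟨fun _ => 0, measurable_const, ?_, by simp⟩,
        fun γ _ => (IsEmpty.false (γ.toFun 0)).elim⟩
      have h0 : (0:ℝ≥0∞) ^ p = 0 := ENNReal.zero_rpow_of_pos (zero_lt_one.trans_le hp)
      simp [h0]
  | inr hX =>
  obtain ⟨x₀⟩ := hX
  have hp0 : 0 < p := zero_lt_one.trans_le hp
  have hpne : p ≠ 0 := hp0.ne'
  have hrwp : ∀ x : ℝ≥0∞, (x ^ (1 / p)) ^ p = x := fun x => by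
    rw [← ENNReal.rpow_mul, one_div_mul_cancel hpne, ENNReal.rpow_one]
  haveI : SigmaFinite μ := by
    refine ⟨⟨⟨fun n => Metric.ball x₀ n, fun _ => trivial, fun n => hball x₀ n, ?_⟩⟩⟩
    ext x
    simp only [Set.mem_iUnion, Metric.mem_ball, Set.mem_univ, iff_true]
    obtain ⟨n, hn⟩ := exists_nat_gt (dist x x₀)
    exact ⟨n, hn⟩
  obtain ⟨Γ, ⟨ρΓ, hρΓm, hρΓint, hρΓtop⟩, hΓcont⟩ := hcurves
  set c : ℕ → ℝ≥0∞ := fun j => ENNReal.ofReal ((2:ℝ)⁻¹ ^ (j + 1)) with hcdef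
  have hcpos : ∀ j, 0 < c j := fun j => ENNReal.ofReal_pos.2 (by positivity)
  have hcne : ∀ j, c j ≠ ⊤ := fun j => ENNReal.ofReal_ne_top
  have hCsum : (∑' j, c j) ≠ ⊤ := by
    have hsummable : Summable (fun j : ℕ => (2:ℝ)⁻¹ ^ (j + 1)) := by
      apply Summable.comp_injective (summable_geometric_of_lt_one (by norm_num) (by norm_num))
      exact add_left_injective 1
    rw [hcdef, ← ENNReal.ofReal_tsum_of_nonneg (fun j => by positivity) hsummable]
    exact ENNReal.ofReal_ne_top
  choose G hGopen hGcap hGUopen using fun j : ℕ =>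
    hU (c j ^ p) (ENNReal.rpow_pos (hcpos j) (hcne j))
  have hkey : ∀ j : ℕ, ∃ f : X → EReal, ∃ g : X → ℝ≥0∞, AEMeasurable f μ ∧
      (∀ x ∈ G j, 1 ≤ f x) ∧ (∫⁻ x, (f x).abs ^ p ∂μ) < c j ^ p ∧
      IsUpperGradientOn f g Set.univ ∧ (∫⁻ x, g x ^ p ∂μ) < c j ^ p := by
    intro j
    have h := hGcap j
    rw [capacity, capacityOn, iInf_lt_iff] at h
    obtain ⟨f, h⟩ := h
    rw [iInf_lt_iff] at h
    obtain ⟨⟨hfm, hf1⟩, h⟩ := h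
    rw [newtonianNormOn] at h
    have h1 : (∫⁻ x in Set.univ, (f x).abs ^ p ∂μ) < c j ^ p := lt_of_le_of_lt le_self_add h
    have h2 : (⨅ (g : X → ℝ≥0∞) (_ : IsUpperGradientOn f g Set.univ),
        ∫⁻ x in Set.univ, g x ^ p ∂μ) < c j ^ p := lt_of_le_of_lt le_add_self h
    rw [iInf_lt_iff] at h2
    obtain ⟨g, h2⟩ := h2
    rw [iInf_lt_iff] at h2
    obtain ⟨hg, h2⟩ := h2
    rw [Measure.restrict_univ] at hfm
    rw [setLIntegral_univ] at h1 h2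
    exact ⟨f, g, hfm, hf1, h1, hg, h2⟩
  choose f g hfm hf1 hfint hgug hgint using hkey
  set w : ℕ → X → ℝ := fun j x => clampE (f j x) with hwdef
  set ω : ℕ → X → ℝ≥0∞ := fun j x => ENNReal.ofReal (w j x) with hωdef
  set uu : X → ℝ≥0∞ := fun x => ∑' j, ω j x with huudef
  set ρg : X → ℝ≥0∞ := fun x => ∑' j, g j x with hρgdef
  have hgm : ∀ j, Measurable (g j) := fun j => (hgug j).1
  have hρgm : Measurable ρg := Measurable.ennreal_tsum hgm
  have hωm : ∀ j, AEMeasurable (ω j) μ := fun j =>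
    (ENNReal.measurable_ofReal.comp measurable_clampE).comp_aemeasurable (hfm j)
  have huum : AEMeasurable uu μ := AEMeasurable.ennreal_tsum hωm
  have huuint : (∫⁻ x, uu x ^ p ∂μ) < ⊤ := by
    have hbnd := lintegral_tsum_rpow_le μ hp ω hωm c (fun j => ?_)
    · exact lt_of_le_of_lt hbnd (ENNReal.rpow_lt_top_of_nonneg hp0.le hCsum)
    · refine le_trans (lintegral_mono fun x =>
        ENNReal.rpow_le_rpow (ofReal_clampE_le_abs _) hp0.le) (hfint j).le
  have hρgint : (∫⁻ x, ρg x ^ p ∂μ) < ⊤ := by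
    have hbnd := lintegral_tsum_rpow_le μ hp g (fun j => (hgm j).aemeasurable) c
      (fun j => (hgint j).le)
    exact lt_of_le_of_lt hbnd (ENNReal.rpow_lt_top_of_nonneg hp0.le hCsum)
  -- measurable hull of the blow-up set of `uu`
  set v := huum.mk uu with hvdef
  have hv : Measurable v := huum.measurable_mk
  have hvae : uu =ᵐ[μ] v := huum.ae_eq_mk
  have hvint : (∫⁻ x, v x ^ p ∂μ) < ⊤ := by
    have hcg : (fun x => uu x ^ p) =ᵐ[μ] fun x => v x ^ p := hvae.mono fun x hx => by simp only [hx]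
    rw [← lintegral_congr_ae hcg]
    exact huuint
  have hvtop : μ {x | v x = ⊤} = 0 := by
    have hae := ae_lt_top (ENNReal.continuous_rpow_const.measurable.comp hv) hvint.ne
    rw [ae_iff] at hae
    refine measure_mono_null ?_ hae
    intro x hx
    simp only [Set.mem_setOf_eq] at hx
    simp only [Set.mem_setOf_eq, Function.comp_apply, not_lt, top_le_iff]
    rw [hx, ENNReal.top_rpow_of_pos hp0]
  set M := toMeasurable μ ({x | v x = ⊤} ∪ {x | uu x ≠ v x}) with hMdef
  have hMm : MeasurableSet M := measurableSet_toMeasurable _ _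
  have hM0 : μ M = 0 := by
    rw [hMdef, measure_toMeasurable]
    exact measure_union_null hvtop (ae_iff.1 hvae)
  have hNM : ∀ x, uu x = ⊤ → x ∈ M := by
    intro x hx
    apply subset_toMeasurable
    by_cases hxv : uu x = v x
    · exact Or.inl (by simp only [Set.mem_setOf_eq]; rw [← hxv]; exact hx)
    · exact Or.inr hxv
  set ρN : X → ℝ≥0∞ := M.indicator (fun _ => ⊤) with hρNdef
  have hρNm : Measurable ρN := measurable_const.indicator hMm
  have hρNint : (∫⁻ x, ρN x ^ p ∂μ) = 0 := by
    have heq : (fun x => ρN x ^ p) = M.indicator (fun _ => ⊤) := by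
      funext x
      rw [hρNdef]
      by_cases hx : x ∈ M
      · simp [Set.indicator_of_mem hx, ENNReal.top_rpow_of_pos hp0]
      · simp [Set.indicator_of_notMem hx, ENNReal.zero_rpow_of_pos hp0]
    rw [heq, lintegral_indicator hMm, setLIntegral_const, hM0, mul_zero]
  -- the modified density from the hypothesis on curves inside U
  set B := toMeasurable μ U with hBdef
  have hBm : MeasurableSet B := measurableSet_toMeasurable _ _
  have hUB : U ⊆ B := subset_toMeasurable _ _
  have hBrestr : μ.restrict B = μ.restrict U := Measure.restrict_toMeasurable_of_sFinite U
  set ρh : X → ℝ≥0∞ := B.indicator ρΓ with hρhdef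
  have hρhm : Measurable ρh := hρΓm.indicator hBm
  have hρhint : (∫⁻ x, ρh x ^ p ∂μ) < ⊤ := by
    have heq : (fun x => ρh x ^ p) = B.indicator (fun x => ρΓ x ^ p) := by
      funext x
      rw [hρhdef]
      by_cases hx : x ∈ B
      · simp [Set.indicator_of_mem hx]
      · simp [Set.indicator_of_notMem hx, ENNReal.zero_rpow_of_pos hp0]
    rw [heq, lintegral_indicator hBm]
    show (∫⁻ x, ρΓ x ^ p ∂(μ.restrict B)) < ⊤
    rw [hBrestr]
    exact hρΓint
  have hρhU : ∀ x ∈ U, ρh x = ρΓ x := fun x hx => Set.indicator_of_mem (hUB hx) _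
  -- the total density
  set ρ : X → ℝ≥0∞ := fun x => ρh x + ρg x + ρN x with hρdef
  have hρm : Measurable ρ := (hρhm.add hρgm).add hρNm
  have hρint : (∫⁻ x, ρ x ^ p ∂μ) < ⊤ := by
    have h1 := ENNReal.lintegral_Lp_add_le (μ := μ) (hρhm.aemeasurable.add hρgm.aemeasurable)
      hρNm.aemeasurable hp
    have h2 := ENNReal.lintegral_Lp_add_le (μ := μ) hρhm.aemeasurable hρgm.aemeasurable hp
    have hN0 : (∫⁻ x, ρN x ^ p ∂μ) ^ (1/p) = 0 := by
      rw [hρNint, ENNReal.zero_rpow_of_pos (by positivity)]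
    have hfin : (∫⁻ x, ρ x ^ p ∂μ) ^ (1/p) < ⊤ := by
      refine lt_of_le_of_lt h1 ?_
      rw [hN0, add_zero]
      refine lt_of_le_of_lt h2 (ENNReal.add_lt_top.2 ⟨?_, ?_⟩)
      · exact ENNReal.rpow_lt_top_of_nonneg (by positivity) hρhint.ne
      · exact ENNReal.rpow_lt_top_of_nonneg (by positivity) hρgint.ne
    have := ENNReal.rpow_lt_top_of_nonneg hp0.le hfin.ne
    rwa [hrwp] at this
  refine ⟨{γ : Curve X | γ.integral ρ = ⊤}, ⟨ρ, hρm, hρint, fun γ hγ => hγ⟩, ?_⟩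
  intro γ hγ
  simp only [Set.mem_setOf_eq] at hγ
  have hfinρ : γ.integral ρ < ⊤ := lt_top_iff_ne_top.2 hγ
  have hpart : ∀ ρ' : X → ℝ≥0∞, (∀ x, ρ' x ≤ ρ x) → γ.integral ρ' < ⊤ := fun ρ' hle =>
    lt_of_le_of_lt (lintegral_mono fun r => hle _) hfinρ
  have hfinh : γ.integral ρh < ⊤ := hpart _ fun x => le_add_right le_self_add
  have hfing : γ.integral ρg < ⊤ := hpart _ fun x => le_add_right le_add_self
  have hfinN : γ.integral ρN < ⊤ := hpart _ fun x => le_add_self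
  have hγcont : ContinuousOn γ.toFun (Set.Icc 0 γ.l) := γ.lip.continuousOn
  have hγam : AEMeasurable γ.toFun (volume.restrict (Set.Icc 0 γ.l)) :=
    hγcont.aemeasurable measurableSet_Icc
  -- the clamped upper-gradient inequality along subcurves of γ
  have hsubUG : ∀ s t : ℝ, s ∈ Set.Icc 0 γ.l → t ∈ Set.Icc 0 γ.l → s ≤ t → ∀ j : ℕ,
      ENNReal.ofReal |w j (γ.toFun s) - w j (γ.toFun t)| ≤
        ∫⁻ r in Set.Icc s t, g j (γ.toFun r) := by
    intro s t hs ht hst j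
    set σ := γ.sub s t hs.1 hst ht.2 with hσdef
    by_cases hnc : σ.Nonconstant
    · have hug := (hgug j).2 σ (fun _ _ => Set.mem_univ _) hnc
      have h0 : σ.toFun 0 = γ.toFun s := by simp [hσdef, Curve.sub]
      have hle : σ.toFun σ.l = γ.toFun t := by simp [hσdef, Curve.sub, sub_add_cancel]
      have hkey := (ofReal_clampE_sub_le (f j (σ.toFun 0)) (f j (σ.toFun σ.l))).trans hug
      rw [h0, hle] at hkey
      rwa [Curve.sub_integral] at hkey
    · have hcc := Curve.sub_const γ s t hs.1 hst ht.2 hnc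
      have : w j (γ.toFun s) = w j (γ.toFun t) := by rw [hwdef]; simp only; rw [hcc]
      rw [this, sub_self, abs_zero, ENNReal.ofReal_zero]
      exact zero_le
  -- propagation of infiniteness of uu along γ
  have hProp : ∀ s ∈ Set.Icc 0 γ.l, ∀ t ∈ Set.Icc 0 γ.l,
      uu (γ.toFun t) ≤ uu (γ.toFun s) + γ.integral ρg := by
    have hpair : ∀ s t : ℝ, s ∈ Set.Icc 0 γ.l → t ∈ Set.Icc 0 γ.l → s ≤ t →
        uu (γ.toFun t) ≤ uu (γ.toFun s) + γ.integral ρg ∧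
        uu (γ.toFun s) ≤ uu (γ.toFun t) + γ.integral ρg := by
      intro s t hs ht hst
      have hIg : (∫⁻ r in Set.Icc s t, ρg (γ.toFun r)) ≤ γ.integral ρg :=
        lintegral_mono' (Measure.restrict_mono (Set.Icc_subset_Icc hs.1 ht.2) le_rfl) le_rfl
      have hmeas : ∀ j : ℕ, AEMeasurable (fun r => g j (γ.toFun r))
          (volume.restrict (Set.Icc s t)) := fun j =>
        (hgm j).comp_aemeasurable
          (hγam.mono_measure (Measure.restrict_mono (Set.Icc_subset_Icc hs.1 ht.2) le_rfl))
      have hswap : (∑' j, ∫⁻ r in Set.Icc s t, g j (γ.toFun r)) =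
          ∫⁻ r in Set.Icc s t, ρg (γ.toFun r) := by
        rw [← lintegral_tsum hmeas]
      constructor
      · have hIj : ∀ j, ω j (γ.toFun t) ≤ ω j (γ.toFun s) +
            ∫⁻ r in Set.Icc s t, g j (γ.toFun r) := by
          intro j
          have hest := hsubUG s t hs ht hst j
          have hreal : w j (γ.toFun t) ≤ w j (γ.toFun s) +
              |w j (γ.toFun s) - w j (γ.toFun t)| := by
            have h1 := le_abs_self (w j (γ.toFun t) - w j (γ.toFun s))
            have h2 := abs_sub_comm (w j (γ.toFun t)) (w j (γ.toFun s))
            linarith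
          calc ω j (γ.toFun t) = ENNReal.ofReal (w j (γ.toFun t)) := rfl
            _ ≤ ENNReal.ofReal (w j (γ.toFun s) + |w j (γ.toFun s) - w j (γ.toFun t)|) :=
                ENNReal.ofReal_le_ofReal hreal
            _ = ENNReal.ofReal (w j (γ.toFun s)) +
                ENNReal.ofReal |w j (γ.toFun s) - w j (γ.toFun t)| :=
                ENNReal.ofReal_add (clampE_nonneg _) (abs_nonneg _)
            _ ≤ ω j (γ.toFun s) + ∫⁻ r in Set.Icc s t, g j (γ.toFun r) :=
                add_le_add le_rfl hest
        have h1 : uu (γ.toFun t) ≤ ∑' j, (ω j (γ.toFun s) +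
            ∫⁻ r in Set.Icc s t, g j (γ.toFun r)) := ENNReal.tsum_le_tsum hIj
        rw [ENNReal.tsum_add, hswap] at h1
        exact h1.trans (add_le_add le_rfl hIg)
      · have hIj : ∀ j, ω j (γ.toFun s) ≤ ω j (γ.toFun t) +
            ∫⁻ r in Set.Icc s t, g j (γ.toFun r) := by
          intro j
          have hest := hsubUG s t hs ht hst j
          have hreal : w j (γ.toFun s) ≤ w j (γ.toFun t) +
              |w j (γ.toFun s) - w j (γ.toFun t)| := by
            have h1 := le_abs_self (w j (γ.toFun s) - w j (γ.toFun t))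
            linarith
          calc ω j (γ.toFun s) = ENNReal.ofReal (w j (γ.toFun s)) := rfl
            _ ≤ ENNReal.ofReal (w j (γ.toFun t) + |w j (γ.toFun s) - w j (γ.toFun t)|) :=
                ENNReal.ofReal_le_ofReal hreal
            _ = ENNReal.ofReal (w j (γ.toFun t)) +
                ENNReal.ofReal |w j (γ.toFun s) - w j (γ.toFun t)| :=
                ENNReal.ofReal_add (clampE_nonneg _) (abs_nonneg _)
            _ ≤ ω j (γ.toFun t) + ∫⁻ r in Set.Icc s t, g j (γ.toFun r) :=
                add_le_add le_rfl hest
        have h1 : uu (γ.toFun s) ≤ ∑' j, (ω j (γ.toFun t) +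
            ∫⁻ r in Set.Icc s t, g j (γ.toFun r)) := ENNReal.tsum_le_tsum hIj
        rw [ENNReal.tsum_add, hswap] at h1
        exact h1.trans (add_le_add le_rfl hIg)
    intro s hs t ht
    rcases le_total s t with hst | hts
    · exact (hpair s t hs ht hst).1
    · exact (hpair t s ht hs hts).2
  by_cases hconst : ∀ s ∈ Set.Icc 0 γ.l, ∀ t ∈ Set.Icc 0 γ.l, γ.toFun s = γ.toFun t
  · intro t ht
    have ht1 : t ∈ Set.Icc 0 γ.l := ht.1
    refine ((continuousOn_const (c := u (γ.toFun t))).congr ?_).continuousWithinAt ht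
    intro s hs
    exact congrArg u (hconst s hs.1 t ht1)
  · push_neg at hconst
    obtain ⟨s₀, hs₀, t₀, ht₀, hneq⟩ := hconst
    have hlpos : 0 < γ.l := by
      rcases lt_or_ge 0 γ.l with h | h
      · exact h
      · exfalso
        have h0 : γ.l = 0 := le_antisymm h γ.l_nonneg
        have hseq : s₀ = t₀ := by
          have h1 := hs₀.1; have h2 := hs₀.2; have h3 := ht₀.1; have h4 := ht₀.2
          rw [h0] at h2 h4
          linarith
        exact hneq (by rw [hseq])
    -- Step A: γ⁻¹(U) is relatively open along γ
    have hopen : ∀ t, t ∈ Set.Icc 0 γ.l → γ.toFun t ∈ U →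
        ∃ δ > 0, ∀ s ∈ Set.Icc 0 γ.l, |s - t| < δ → γ.toFun s ∈ U := by
      intro t ht htU
      by_contra hcon
      push_neg at hcon
      set J : ℕ → Set ℝ := fun k => Set.Icc (t - 1/(k+1)) (t + 1/(k+1)) with hJdef
      set τ : ℕ → ℝ≥0∞ := fun k => ∫⁻ r in J k ∩ Set.Icc 0 γ.l, ρg (γ.toFun r) with hτdef
      have hτle : ∀ k, τ k ≤ γ.integral ρg := fun k =>
        lintegral_mono' (Measure.restrict_mono Set.inter_subset_right le_rfl) le_rfl
      have hργγ : AEMeasurable (fun r => ρg (γ.toFun r)) (volume.restrict (Set.Icc 0 γ.l)) :=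
        hρgm.comp_aemeasurable hγam
      set q := hργγ.mk _ with hqdef
      have hq : Measurable q := hργγ.measurable_mk
      have hqae := hργγ.ae_eq_mk
      set κ : Measure ℝ := (volume.restrict (Set.Icc 0 γ.l)).withDensity q with hκdef
      have hκτ : ∀ k, τ k = κ (J k) := by
        intro k
        rw [hκdef, withDensity_apply q (measurableSet_Icc : MeasurableSet (J k)),
          Measure.restrict_restrict measurableSet_Icc]
        have hres : (fun r => ρg (γ.toFun r)) =ᵐ[volume.restrict (J k ∩ Set.Icc 0 γ.l)] q :=
          hqae.filter_mono (ae_mono (Measure.restrict_mono Set.inter_subset_right le_rfl))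
        exact lintegral_congr_ae hres
      have hκ0 : κ {t} = 0 := by
        refine (withDensity_absolutelyContinuous _ _) ?_
        refine le_antisymm ?_ zero_le
        calc (volume.restrict (Set.Icc 0 γ.l)) {t} ≤ volume {t} :=
              Measure.restrict_le_self _
          _ = 0 := Real.volume_singleton
      have hAnti : Antitone J := by
        intro k k' hkk'
        have hle : (1:ℝ)/(k'+1) ≤ 1/(k+1) := by
          apply one_div_le_one_div_of_le (by positivity)
          have : (k:ℝ) ≤ k' := Nat.cast_le.2 hkk'
          linarith
        apply Set.Icc_subset_Icc <;> linarith
      have hInter : ⋂ k, J k = {t} := by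
        ext x
        simp only [hJdef, Set.mem_iInter, Set.mem_Icc, Set.mem_singleton_iff]
        constructor
        · intro hx
          by_contra hne
          have hpos : 0 < |x - t| := abs_pos.2 (sub_ne_zero.2 hne)
          obtain ⟨k, hk⟩ := exists_nat_one_div_lt hpos
          have h1 := (hx k).1
          have h2 := (hx k).2
          have : |x - t| ≤ 1/(k+1) := abs_le.2 ⟨by linarith, by linarith⟩
          linarith
        · rintro rfl k
          have : (0:ℝ) < 1/(k+1) := by positivity
          constructor <;> linarith
      have hτ0 : Filter.Tendsto τ Filter.atTop (nhds 0) := by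
        have htend := tendsto_measure_iInter_atTop (μ := κ)
          (fun k => measurableSet_Icc.nullMeasurableSet) hAnti
          ⟨0, by rw [← hκτ]; exact (lt_of_le_of_lt (hτle 0) hfing).ne⟩
        rw [hInter, hκ0] at htend
        exact htend.congr fun k => (hκτ k).symm
      have hwt : ∀ j, w j (γ.toFun t) = 1 := by
        intro j
        obtain ⟨r', hr', hrsub⟩ := Metric.isOpen_iff.1 (hGUopen j) _
          (Or.inr htU : γ.toFun t ∈ G j ∪ U)
        have hk : ∀ k : ℕ, ENNReal.ofReal (1 - w j (γ.toFun t)) ≤ τ k := by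
          intro k
          obtain ⟨s, hsIcc, hst, hsU⟩ := hcon (min (1/(k+1)) r') (lt_min (by positivity) hr')
          have hsG : γ.toFun s ∈ G j := by
            have hball : γ.toFun s ∈ Metric.ball (γ.toFun t) r' := by
              rw [Metric.mem_ball]
              have hd := γ.lip.dist_le_mul s hsIcc t ht
              have hd' : dist (γ.toFun s) (γ.toFun t) ≤ dist s t := by simpa using hd
              calc dist (γ.toFun s) (γ.toFun t) ≤ dist s t := hd'
                _ = |s - t| := Real.dist_eq _ _
                _ < r' := lt_of_lt_of_le hst (min_le_right _ _)
            exact (hrsub hball).resolve_right hsU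
          have hws : w j (γ.toFun s) = 1 := clampE_eq_one (hf1 j _ hsG)
          have h1k : |s - t| < 1/(k+1) := lt_of_lt_of_le hst (min_le_left _ _)
          have habs := abs_lt.1 h1k
          have hIccsub : ∀ s' t' : ℝ, s' = min s t → t' = max s t →
              Set.Icc s' t' ⊆ J k ∩ Set.Icc 0 γ.l := by
            intro s' t' hs' ht'
            intro r hr
            have hminge : t - 1/(k+1) ≤ s' := by
              rw [hs']
              refine le_min (by linarith) (by
                have : (0:ℝ) < 1/(k+1) := by positivity
                linarith)
            have hmaxle : t' ≤ t + 1/(k+1) := by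
              rw [ht']
              refine max_le (by linarith) (by
                have : (0:ℝ) < 1/(k+1) := by positivity
                linarith)
            have hminge0 : 0 ≤ s' := by rw [hs']; exact le_min hsIcc.1 ht.1
            have hmaxlel : t' ≤ γ.l := by rw [ht']; exact max_le hsIcc.2 ht.2
            exact ⟨⟨by linarith [hr.1], by linarith [hr.2]⟩,
              ⟨by linarith [hr.1], by linarith [hr.2]⟩⟩
          rcases le_total s t with hord | hord
          · have hest := hsubUG s t hsIcc ht hord j
            have hsub2 : (∫⁻ r in Set.Icc s t, g j (γ.toFun r)) ≤ τ k := by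
              rw [hτdef]
              refine lintegral_mono' (Measure.restrict_mono ?_ le_rfl)
                (fun r => ENNReal.le_tsum j)
              exact hIccsub s t (min_eq_left hord).symm (max_eq_right hord).symm
            calc ENNReal.ofReal (1 - w j (γ.toFun t))
                ≤ ENNReal.ofReal |w j (γ.toFun s) - w j (γ.toFun t)| := by
                  rw [hws]
                  exact ENNReal.ofReal_le_ofReal (le_abs_self _)
              _ ≤ τ k := hest.trans hsub2
          · have hest := hsubUG t s ht hsIcc hord j
            have hsub2 : (∫⁻ r in Set.Icc t s, g j (γ.toFun r)) ≤ τ k := by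
              rw [hτdef]
              refine lintegral_mono' (Measure.restrict_mono ?_ le_rfl)
                (fun r => ENNReal.le_tsum j)
              exact hIccsub t s (min_eq_right hord).symm (max_eq_left hord).symm
            calc ENNReal.ofReal (1 - w j (γ.toFun t))
                ≤ ENNReal.ofReal |w j (γ.toFun t) - w j (γ.toFun s)| := by
                  rw [hws]
                  rw [abs_sub_comm]
                  exact ENNReal.ofReal_le_ofReal (le_abs_self _)
              _ ≤ τ k := hest.trans hsub2
        have h0 : ENNReal.ofReal (1 - w j (γ.toFun t)) ≤ 0 :=
          ge_of_tendsto hτ0 (Filter.Eventually.of_forall hk)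
        have h1 : 1 - w j (γ.toFun t) ≤ 0 :=
          ENNReal.ofReal_eq_zero.1 (le_antisymm h0 zero_le)
        have h2 : w j (γ.toFun t) ≤ 1 := clampE_le_one _
        linarith [le_antisymm h2 (by linarith : (1:ℝ) ≤ w j (γ.toFun t))]
      have huut : uu (γ.toFun t) = ⊤ := by
        have hone : ∀ j : ℕ, ω j (γ.toFun t) = 1 := fun j => by
          rw [hωdef]
          simp only
          rw [hwt j, ENNReal.ofReal_one]
        calc uu (γ.toFun t) = ∑' j : ℕ, ω j (γ.toFun t) := rfl
          _ = ∑' _ : ℕ, (1:ℝ≥0∞) := tsum_congr hone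
          _ = ⊤ := ENNReal.tsum_const_eq_top_of_ne_zero one_ne_zero
      have hprop : ∀ s ∈ Set.Icc 0 γ.l, uu (γ.toFun s) = ⊤ := by
        intro s hs
        by_contra hne
        have hlt : uu (γ.toFun t) < ⊤ :=
          lt_of_le_of_lt (hProp s hs t ht)
            (ENNReal.add_lt_top.2 ⟨lt_top_iff_ne_top.2 hne, hfing⟩)
        exact absurd huut hlt.ne
      have hNtop : γ.integral ρN = ⊤ := by
        have hgeq : ∀ r ∈ Set.Icc 0 γ.l, (⊤:ℝ≥0∞) ≤ ρN (γ.toFun r) := by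
          intro r hr
          rw [hρNdef]
          rw [Set.indicator_of_mem (hNM _ (hprop r hr))]
        have hle2 : (∫⁻ _ in Set.Icc 0 γ.l, (⊤:ℝ≥0∞)) ≤ γ.integral ρN :=
          lintegral_mono_ae ((ae_restrict_iff' measurableSet_Icc).2 (ae_of_all _ hgeq))
        rw [setLIntegral_const, Real.volume_Icc, sub_zero] at hle2
        have hmul : (⊤:ℝ≥0∞) * ENNReal.ofReal γ.l = ⊤ := by
          apply ENNReal.top_mul
          simp only [ne_eq, ENNReal.ofReal_eq_zero, not_le]
          exact hlpos
        rw [hmul] at hle2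
        exact top_le_iff.1 hle2
      exact absurd hNtop hfinN.ne
    -- Step B: continuity at each point of the preimage
    intro t ht
    obtain ⟨htIcc, htU⟩ := ht
    obtain ⟨δ, hδ, hδP⟩ := hopen t htIcc htU
    set a := max 0 (t - δ/2) with hadef
    set b := min γ.l (t + δ/2) with hbdef
    have ha0 : 0 ≤ a := le_max_left _ _
    have hat : a ≤ t := max_le htIcc.1 (by linarith)
    have htb : t ≤ b := le_min htIcc.2 (by linarith)
    have hbl : b ≤ γ.l := min_le_left _ _
    have hab : a ≤ b := hat.trans htb
    have hsubP : ∀ s ∈ Set.Icc a b, s ∈ Set.Icc 0 γ.l ∧ γ.toFun s ∈ U := by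
      intro s hs
      have h1 : s ∈ Set.Icc 0 γ.l := ⟨ha0.trans hs.1, hs.2.trans hbl⟩
      refine ⟨h1, hδP s h1 ?_⟩
      have h2 : t - δ/2 ≤ s := le_trans (le_max_right _ _) hs.1
      have h3 : s ≤ t + δ/2 := le_trans hs.2 (min_le_right _ _)
      rw [abs_lt]
      constructor <;> linarith
    set σ := γ.sub a b ha0 hab hbl with hσdef
    have hσl : σ.l = b - a := rfl
    have hσU : σ.InSet U := by
      intro r hr
      have hr2 : r ≤ b - a := by rw [← hσl]; exact hr.2
      have hmem : r + a ∈ Set.Icc a b := ⟨by linarith [hr.1], by linarith⟩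
      exact (hsubP _ hmem).2
    have hσΓ : σ ∉ Γ := by
      intro hmem
      have htop := hρΓtop σ hmem
      have heq : σ.integral ρΓ = σ.integral ρh := by
        rw [hσdef, Curve.sub_integral, Curve.sub_integral]
        apply set_lintegral_congr_on measurableSet_Icc
        intro r hr
        exact (hρhU _ (hsubP r hr).2).symm
      have hle2 : σ.integral ρh ≤ γ.integral ρh := by
        rw [hσdef, Curve.sub_integral]
        exact lintegral_mono' (Measure.restrict_mono (Set.Icc_subset_Icc ha0 hbl) le_rfl) le_rfl
      rw [heq] at htop
      rw [htop] at hle2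
      exact absurd (top_le_iff.1 hle2) hfinh.ne
    have hcont := hΓcont σ hσU hσΓ
    have hmaps : Set.MapsTo (fun s => s - a) (Set.Icc a b) (Set.Icc 0 σ.l) := by
      intro s hs
      rw [hσl]
      simp only [Set.mem_Icc] at hs ⊢
      constructor <;> linarith [hs.1, hs.2]
    have hcont2 : ContinuousOn (fun s => u (γ.toFun s)) (Set.Icc a b) := by
      have heq : (fun s : ℝ => u (γ.toFun s)) =
          (fun r => u (σ.toFun r)) ∘ (fun s : ℝ => s - a) := by
        funext s
        simp [hσdef, Curve.sub, sub_add_cancel]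
      rw [heq]
      exact hcont.comp (continuous_sub_right a).continuousOn hmaps
    have hballmem : Metric.ball t (δ/2) ∈ nhds t := Metric.ball_mem_nhds t (by linarith)
    rw [← continuousWithinAt_inter hballmem]
    refine (hcont2.continuousWithinAt ⟨hat, htb⟩).mono ?_
    rintro s ⟨⟨hsIcc, hsU⟩, hsball⟩
    rw [Metric.mem_ball, Real.dist_eq] at hsball
    have habs := abs_lt.1 hsball
    exact ⟨max_le hsIcc.1 (by linarith), le_min hsIcc.2 (by linarith)⟩



end
end

section
/- Assume the support of μ, Y = spt μ, is complete, that X ∖ Y has zero capacity C_p and p-almost no curve in X intersects X ∖ Y. If U ⊂ X is such that U ∩ Y is quasiopen in Y, then U is quasiopen in X. -/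
open Set MeasureTheory Metric ENNReal

noncomputable section

variable {X : Type*} [MetricSpace X] [MeasurableSpace X] [BorelSpace X]

/-- If the support `Y` of `μ` is complete, `X ∖ Y` has zero capacity, `p`-almost no
curve meets `X ∖ Y`, and `U ∩ Y` is quasiopen in `Y`, then `U` is quasiopen in `X`. -/
theorem stmt18 (μ : Measure X) (p : ℝ) (hp : 1 ≤ p)
    (hball : ∀ (x : X) (r : ℝ), μ (Metric.ball x r) < ⊤)
    (Y : Set X) (hY : Y = {x : X | ∀ r : ℝ, 0 < r → 0 < μ (Metric.ball x r)})
    (hYcomplete : IsComplete Y)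
    (hYcap : capacity μ p Yᶜ = 0)
    (hYcurves : ZeroModulus μ p {γ : Curve X | γ.Nonconstant ∧ ∃ t ∈ Set.Icc 0 γ.l, γ.toFun t ∉ Y})
    (U : Set X)
    (hUY : ∀ ε : ℝ≥0∞, 0 < ε → ∃ G : Set X, G ⊆ Y ∧ RelOpenIn Y G ∧
      capacityOn μ p Y G < ε ∧ RelOpenIn Y (G ∪ (U ∩ Y))) :
    Quasiopen μ p U := by
  classical
  have hppos : (0:ℝ) < p := lt_of_lt_of_le zero_lt_one hp
  -- `Y` is closed
  have hYclosed : IsClosed Y := by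
    rw [← isOpen_compl_iff, Metric.isOpen_iff]
    intro x hx
    have hx' : ¬ ∀ r : ℝ, 0 < r → 0 < μ (Metric.ball x r) := by
      rw [Set.mem_compl_iff, hY] at hx; exact hx
    push_neg at hx'
    obtain ⟨r, hr, hr0⟩ := hx'
    have hr0' : μ (Metric.ball x r) = 0 := le_antisymm hr0 zero_le
    refine ⟨r/2, by linarith, fun y hy => ?_⟩
    rw [Metric.mem_ball] at hy
    rw [Set.mem_compl_iff, hY, Set.mem_setOf_eq]
    push_neg
    refine ⟨r/2, by linarith, ?_⟩
    have hsub : Metric.ball y (r/2) ⊆ Metric.ball x r := by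
      intro z hz
      rw [Metric.mem_ball] at hz ⊢
      have := dist_triangle z y x
      linarith
    exact (measure_mono hsub).trans hr0'.le
  have hYmeas : MeasurableSet Y := hYclosed.measurableSet
  have habs : ∀ a : EReal, 1 ≤ a → 1 ≤ a.abs := by
    intro a ha
    induction a using EReal.rec with
    | bot =>
      have hb := le_bot_iff.mp ha
      rw [← EReal.coe_one] at hb
      exact absurd hb (EReal.coe_ne_bot 1)
    | top => simp
    | coe x =>
      have hx : (1:ℝ) ≤ x := by exact_mod_cast ha
      rw [EReal.abs_def, show ((1:ℝ≥0∞)) = ENNReal.ofReal 1 by simp]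
      exact ENNReal.ofReal_le_ofReal (by rw [abs_of_nonneg (by linarith)]; exact hx)
  have habsp : ∀ a : EReal, 1 ≤ a → 1 ≤ a.abs ^ p := by
    intro a ha
    calc (1:ℝ≥0∞) = 1 ^ p := (ENNReal.one_rpow p).symm
    _ ≤ a.abs ^ p := ENNReal.rpow_le_rpow (habs a ha) hppos.le
  -- `μ Yᶜ = 0`
  have hμYc : μ Yᶜ = 0 := by
    have hle : μ Yᶜ ≤ capacity μ p Yᶜ := by
      rw [capacity, capacityOn]
      refine le_iInf₂ fun f hf => ?_
      rw [newtonianNormOn]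
      calc μ Yᶜ = ∫⁻ _ in Yᶜ, 1 ∂μ := by simp
      _ ≤ ∫⁻ x in Yᶜ, (f x).abs ^ p ∂μ := by
          refine lintegral_mono_ae ?_
          filter_upwards [ae_restrict_of_forall_mem hYmeas.compl
            (fun x hx => hf.2 x hx)] with x hx
          exact habsp _ hx
      _ ≤ ∫⁻ x in Set.univ, (f x).abs ^ p ∂μ :=
          lintegral_mono' (Measure.restrict_mono (Set.subset_univ _) le_rfl) le_rfl
      _ ≤ _ := le_self_add
    exact le_antisymm (hle.trans hYcap.le) zero_le
  have haeY : ∀ᵐ x ∂μ, x ∈ Y := by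
    rw [MeasureTheory.ae_iff]
    exact hμYc
  intro ε hε
  set ε' := min ε 1 with hε'def
  have hε'pos : 0 < ε' := lt_min hε zero_lt_one
  have hε'top : ε' ≠ ⊤ := ((min_le_right ε 1).trans_lt ENNReal.one_lt_top).ne
  have h2p : (2:ℝ≥0∞) ^ p ≠ ⊤ := (ENNReal.rpow_lt_top_of_nonneg hppos.le (by norm_num)).ne
  set k := 1 + 2 * (2:ℝ≥0∞) ^ p with hkdef
  have hk0 : k ≠ 0 := by
    intro h
    rw [hkdef, add_eq_zero] at h
    exact one_ne_zero h.1
  have hktop : k ≠ ⊤ := ENNReal.add_ne_top.mpr ⟨ENNReal.one_ne_top,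
    ENNReal.mul_ne_top (by norm_num) h2p⟩
  set ε₀ := ε' / 2 / k with hε₀def
  have hε₀0 : ε₀ ≠ 0 := by
    simp only [hε₀def, ne_eq, ENNReal.div_eq_zero_iff, not_or]
    exact ⟨⟨hε'pos.ne', ENNReal.ofNat_ne_top⟩, hktop⟩
  have hε₀top : ε₀ ≠ ⊤ :=
    (ENNReal.div_lt_top (ENNReal.div_lt_top hε'top (by norm_num)).ne hk0).ne
  obtain ⟨G, hGY, ⟨V, hVopen, hGV⟩, hGcap, ⟨W, hWopen, hGUW⟩⟩ :=
    hUY ε₀ (pos_iff_ne_zero.mpr hε₀0)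
  -- extract an admissible function `f` and upper gradient `g` for `G` in `Y`
  rw [capacityOn, iInf_lt_iff] at hGcap
  obtain ⟨f, hf⟩ := hGcap
  rw [iInf_lt_iff] at hf
  obtain ⟨⟨hfaem, hf1⟩, hfnorm⟩ := hf
  rw [newtonianNormOn] at hfnorm
  have hA : (∫⁻ x in Y, (f x).abs ^ p ∂μ) ≤ ε₀ := le_self_add.trans hfnorm.le
  have hB : (⨅ (g : X → ℝ≥0∞) (_ : IsUpperGradientOn f g Y), ∫⁻ x in Y, g x ^ p ∂μ) < ε₀ :=
    le_add_self.trans_lt hfnorm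
  rw [iInf_lt_iff] at hB
  obtain ⟨g, hg⟩ := hB
  rw [iInf_lt_iff] at hg
  obtain ⟨hgUG, hgint⟩ := hg
  obtain ⟨ρ, hρm, hρtop, hρinf⟩ := hYcurves
  set I := ∫⁻ x, ρ x ^ p ∂μ with hIdef
  set δ := (ε₀ / (2 * (I + 1))) ^ (1/p) with hδdef
  have hden0 : 2 * (I+1) ≠ 0 := by simp
  have hdentop : 2*(I+1) ≠ ⊤ := ENNReal.mul_ne_top (by norm_num)
    (ENNReal.add_ne_top.mpr ⟨hρtop.ne, ENNReal.one_ne_top⟩)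
  have hbase0 : ε₀ / (2*(I+1)) ≠ 0 := by
    simp only [ne_eq, ENNReal.div_eq_zero_iff, not_or]
    exact ⟨hε₀0, hdentop⟩
  have hbasetop : ε₀ / (2*(I+1)) ≠ ⊤ := (ENNReal.div_lt_top hε₀top hden0).ne
  have hδ0 : δ ≠ 0 := by
    rw [hδdef, ne_eq, ENNReal.rpow_eq_zero_iff]
    push_neg
    exact ⟨fun h => absurd h hbase0, fun h => absurd h hbasetop⟩
  have hδtop : δ ≠ ⊤ := by
    rw [hδdef, ne_eq, ENNReal.rpow_eq_top_iff]
    push_neg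
    exact ⟨fun h => absurd h hbase0, fun h => absurd h hbasetop⟩
  have hδp : δ ^ p = ε₀ / (2*(I+1)) := by
    rw [hδdef, ← ENNReal.rpow_mul, one_div, inv_mul_cancel₀ hppos.ne', ENNReal.rpow_one]
  have hδptop : δ ^ p ≠ ⊤ := by rw [hδp]; exact hbasetop
  have hδI : δ ^ p * I ≤ ε₀ := by
    rw [hδp]
    calc ε₀ / (2*(I+1)) * I ≤ ε₀ / (2*(I+1)) * (2*(I+1)) := by
          refine mul_le_mul_right ?_ _
          calc I ≤ I + 1 := le_self_add
          _ ≤ 2*(I+1) := le_mul_of_one_le_left zero_le one_le_two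
    _ = ε₀ := ENNReal.div_mul_cancel hden0 hdentop
  -- the extended test function and upper gradient
  set f' : X → EReal := fun x => if x ∈ Y then f x else 1 with hf'def
  set g' : X → ℝ≥0∞ := fun x => Y.indicator g x + δ * ρ x with hg'def
  have hf'eq : f' =ᵐ[μ] f := haeY.mono fun x hx => if_pos hx
  have hrestr : μ.restrict Y = μ := Measure.restrict_eq_self_of_ae_mem haeY
  have hfaemμ : AEMeasurable f μ := by rw [← hrestr]; exact hfaem
  have hf'aem : AEMeasurable f' μ := hfaemμ.congr hf'eq.symm
  have hfirst : (∫⁻ x in Set.univ, (f' x).abs ^ p ∂μ) = ∫⁻ x in Y, (f x).abs ^ p ∂μ := by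
    rw [Measure.restrict_univ]
    calc (∫⁻ x, (f' x).abs ^ p ∂μ) = ∫⁻ x, (f x).abs ^ p ∂μ :=
        lintegral_congr_ae (hf'eq.mono fun x hx =>
          show (f' x).abs ^ p = (f x).abs ^ p by rw [hx])
    _ = ∫⁻ x in Y, (f x).abs ^ p ∂μ := by
        rw [← lintegral_add_compl (fun x => (f x).abs ^ p) hYmeas,
          setLIntegral_measure_zero _ _ hμYc, add_zero]
  have hg'meas : Measurable g' := (hgUG.1.indicator hYmeas).add (hρm.const_mul δ)
  have hUG' : IsUpperGradientOn f' g' Set.univ := by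
    refine ⟨hg'meas, fun γ _ hnc => ?_⟩
    by_cases hγY : ∀ t ∈ Set.Icc 0 γ.l, γ.toFun t ∈ Y
    · have h0 : γ.toFun 0 ∈ Y := hγY 0 ⟨le_rfl, γ.l_nonneg⟩
      have hl : γ.toFun γ.l ∈ Y := hγY γ.l ⟨γ.l_nonneg, le_rfl⟩
      have e0 : f' (γ.toFun 0) = f (γ.toFun 0) := by
        simp only [hf'def]
        rw [if_pos h0]
      have el : f' (γ.toFun γ.l) = f (γ.toFun γ.l) := by
        simp only [hf'def]
        rw [if_pos hl]
      rw [e0, el]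
      refine (hgUG.2 γ hγY hnc).trans ?_
      unfold Curve.integral
      refine lintegral_mono_ae ?_
      filter_upwards [ae_restrict_of_forall_mem measurableSet_Icc
        (fun t ht => hγY t ht)] with t ht
      calc g (γ.toFun t) = Y.indicator g (γ.toFun t) := (Set.indicator_of_mem ht g).symm
      _ ≤ g' (γ.toFun t) := le_self_add
    · push_neg at hγY
      have hγΓ : γ ∈ {γ : Curve X | γ.Nonconstant ∧ ∃ t ∈ Set.Icc 0 γ.l, γ.toFun t ∉ Y} := by
        obtain ⟨t, ht, htY⟩ := hγY
        exact ⟨hnc, t, ht, htY⟩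
      have htop : γ.integral g' = ⊤ := by
        have h1 : γ.integral (fun x => δ * ρ x) ≤ γ.integral g' := by
          unfold Curve.integral
          exact lintegral_mono fun t => le_add_self
        have h2 : γ.integral (fun x => δ * ρ x) = ⊤ := by
          show (∫⁻ t in Set.Icc 0 γ.l, δ * ρ (γ.toFun t)) = ⊤
          rw [lintegral_const_mul' δ _ hδtop,
            show (∫⁻ t in Set.Icc 0 γ.l, ρ (γ.toFun t)) = ⊤ from hρinf γ hγΓ,
            ENNReal.mul_top hδ0]
        exact top_le_iff.mp (h2 ▸ h1)
      rw [htop]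
      exact le_top
  -- bound the integral of `g' ^ p`
  have hgp : (∫⁻ x, (g' x) ^ p ∂μ) ≤ (2:ℝ≥0∞) ^ p * (ε₀ + ε₀) := by
    have hpt : ∀ a b : ℝ≥0∞, (a + b) ^ p ≤ 2 ^ p * (a ^ p + b ^ p) := by
      intro a b
      calc (a + b) ^ p ≤ (2 * max a b) ^ p := by
            refine ENNReal.rpow_le_rpow ?_ hppos.le
            rw [two_mul]
            exact add_le_add (le_max_left a b) (le_max_right a b)
      _ = 2 ^ p * (max a b) ^ p := ENNReal.mul_rpow_of_nonneg _ _ hppos.le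
      _ ≤ 2 ^ p * (a ^ p + b ^ p) := by
          refine mul_le_mul_right ?_ _
          rcases max_cases a b with ⟨h, _⟩ | ⟨h, _⟩ <;> rw [h]
          · exact le_self_add
          · exact le_add_self
    calc (∫⁻ x, (g' x) ^ p ∂μ)
        ≤ ∫⁻ x, 2 ^ p * ((Y.indicator g x) ^ p + (δ * ρ x) ^ p) ∂μ :=
          lintegral_mono fun x => hpt _ _
    _ = 2 ^ p * ∫⁻ x, ((Y.indicator g x) ^ p + (δ * ρ x) ^ p) ∂μ :=
          lintegral_const_mul' _ _ h2p
    _ = 2 ^ p * ((∫⁻ x, (Y.indicator g x) ^ p ∂μ) + ∫⁻ x, (δ * ρ x) ^ p ∂μ) := by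
          rw [lintegral_add_left ((hgUG.1.indicator hYmeas).pow_const p)]
    _ ≤ 2 ^ p * (ε₀ + ε₀) := by
          refine mul_le_mul_right (add_le_add ?_ ?_) _
          · have : ∀ x, (Y.indicator g x) ^ p = Y.indicator (fun x => g x ^ p) x := by
              intro x
              by_cases hx : x ∈ Y <;>
                simp [hx, ENNReal.zero_rpow_of_pos hppos]
            rw [lintegral_congr this, lintegral_indicator hYmeas]
            exact hgint.le
          · have : ∀ x, (δ * ρ x) ^ p = δ ^ p * ρ x ^ p := fun x =>
              ENNReal.mul_rpow_of_nonneg _ _ hppos.le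
            rw [lintegral_congr this, lintegral_const_mul' _ _ hδptop]
            exact hδI
  -- capacity bound for `G ∪ Yᶜ`
  have hcaple : capacity μ p (G ∪ Yᶜ) < ε := by
    have hf'1 : ∀ x ∈ G ∪ Yᶜ, 1 ≤ f' x := by
      rintro x (hx | hx)
      · have : f' x = f x := by
          simp only [hf'def]
          rw [if_pos (hGY hx)]
        rw [this]
        exact hf1 x hx
      · have : f' x = 1 := by
          simp only [hf'def]
          rw [if_neg hx]
        rw [this]
    have hle : capacity μ p (G ∪ Yᶜ) ≤ ε₀ * k := by
      rw [capacity, capacityOn]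
      refine (iInf₂_le f' ⟨by rw [Measure.restrict_univ]; exact hf'aem, hf'1⟩).trans ?_
      rw [newtonianNormOn]
      have h1 : (∫⁻ x in Set.univ, (f' x).abs ^ p ∂μ) ≤ ε₀ := hfirst.le.trans hA
      have h2 : (⨅ (g₀ : X → ℝ≥0∞) (_ : IsUpperGradientOn f' g₀ Set.univ),
          ∫⁻ x in Set.univ, g₀ x ^ p ∂μ) ≤ ∫⁻ x in Set.univ, g' x ^ p ∂μ :=
        iInf₂_le g' hUG'
      have h3 : (∫⁻ x in Set.univ, g' x ^ p ∂μ) ≤ 2 ^ p * (ε₀ + ε₀) := by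
        rw [Measure.restrict_univ]; exact hgp
      calc _ ≤ ε₀ + 2 ^ p * (ε₀ + ε₀) := add_le_add h1 (h2.trans h3)
      _ = ε₀ * k := by rw [hkdef]; ring
    have hek : ε₀ * k = ε' / 2 := by
      rw [hε₀def]
      exact ENNReal.div_mul_cancel hk0 hktop
    calc capacity μ p (G ∪ Yᶜ) ≤ ε' / 2 := hle.trans_eq hek
    _ < ε' := ENNReal.half_lt_self hε'pos.ne' hε'top
    _ ≤ ε := min_le_left _ _
  -- conclude
  refine ⟨V ∪ Yᶜ, hVopen.union hYclosed.isOpen_compl, ?_, ?_⟩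
  · have hVG : V ∪ Yᶜ = G ∪ Yᶜ := by
      rw [hGV]
      ext x
      by_cases hx : x ∈ Y <;> simp [hx]
    rw [hVG]
    exact hcaple
  · have hW : (V ∪ U) ∩ Y = W ∩ Y := by
      rw [Set.union_inter_distrib_right, ← hGV, hGUW]
    have hVU : V ∪ Yᶜ ∪ U = W ∪ Yᶜ := by
      ext x
      by_cases hx : x ∈ Y
      · have hiff := Set.ext_iff.mp hW x
        simp only [Set.mem_inter_iff, Set.mem_union, hx, and_true] at hiff
        simp only [Set.mem_union, Set.mem_compl_iff, hx, not_true_eq_false, or_false]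
        tauto
      · simp [hx]
    rw [hVU]
    exact (hWopen.union hYclosed.isOpen_compl)

end
end
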